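/- arXiv:math/9905119 — 11 statements merged into one kernel-verified Lean document; each statement's English description precedes it below -/
import Mathlib

section
/- For a non-principal filter F on the natural numbers, player TWO does not have a winning strategy in the game G1(F). -/
open Filter Set

/-- A strategy: maps finite sequences of the opponent's moves to a natural number. -/
abbrev Strat := List ℕ → ℕ

/-- TWO's move in inning `k` (0-indexed) when following strategy `σ` against ONE's
moves `m`: TWO has seen `m 0, …, m k`. -/
def twoFollow (σ : Strat) (m : ℕ → ℕ) (k : ℕ) : ℕ :=
  σ (List.ofFn fun i : Fin (k + 1) => m i)

/-- ONE's move in inning `k` when following strategy `σ` against TWO's moves `n`: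
ONE's move depends on `n 0, …, n (k-1)` (the first move is `σ []`). -/
def oneFollow (σ : Strat) (n : ℕ → ℕ) (k : ℕ) : ℕ :=
  σ (List.ofFn fun i : Fin k => n i)

/-- TWO wins the play `(m 0, n 0, m 1, n 1, …)` of the game `G1(F)`. -/
def TwoWins1 (F : Set (Set ℕ)) (m n : ℕ → ℕ) : Prop :=
  StrictMono n ∧ (∀ N : ℕ, ∃ k, N ≤ k ∧ m k < n k) ∧ Set.range n ∈ F

/-- TWO wins the play `(m 0, n 0, m 1, n 1, …)` of the game `G2(F)`. -/
def TwoWins2 (F : Set (Set ℕ)) (m n : ℕ → ℕ) : Prop :=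
  (∀ᶠ k in Filter.atTop, m k < n k) ∧ Set.range n ∈ F

/-- `σ` is a winning strategy for TWO in `G1(F)`. -/
def TwoWinning1 (F : Set (Set ℕ)) (σ : Strat) : Prop :=
  ∀ m : ℕ → ℕ, TwoWins1 F m (twoFollow σ m)

/-- `σ` is a winning strategy for ONE in `G1(F)`. -/
def OneWinning1 (F : Set (Set ℕ)) (σ : Strat) : Prop :=
  ∀ n : ℕ → ℕ, ¬ TwoWins1 F (oneFollow σ n) n

/-- `σ` is a winning strategy for TWO in `G2(F)`. -/
def TwoWinning2 (F : Set (Set ℕ)) (σ : Strat) : Prop :=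
  ∀ m : ℕ → ℕ, TwoWins2 F m (twoFollow σ m)

/-- `σ` is a winning strategy for ONE in `G2(F)`. -/
def OneWinning2 (F : Set (Set ℕ)) (σ : Strat) : Prop :=
  ∀ n : ℕ → ℕ, ¬ TwoWins2 F (oneFollow σ n) n

/-- `F` is a non-principal filter on `ℕ`: upward closed, closed under finite
intersections, and every member is infinite. -/
def IsNPFilter (F : Set (Set ℕ)) : Prop :=
  (∀ X ∈ F, ∀ Y : Set ℕ, X ⊆ Y → Y ∈ F) ∧
  (∀ X ∈ F, ∀ Y ∈ F, X ∩ Y ∈ F) ∧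
  (∀ X ∈ F, X.Infinite)

/-- `F` is a rare filter: every partition of `ℕ` into disjoint (nonempty) finite sets
admits a selector in `F`. -/
def IsRare (F : Set (Set ℕ)) : Prop :=
  ∀ I : ℕ → Set ℕ, (∀ n, (I n).Finite) → (∀ n, (I n).Nonempty) →
    (Pairwise fun i j => Disjoint (I i) (I j)) → (⋃ n, I n) = Set.univ →
    ∃ X ∈ F, ∀ n, (X ∩ I n).Subsingleton

/-- The subset of Cantor space `2^ℕ` corresponding to the filter `F`. -/
def cantorCoded (F : Set (Set ℕ)) : Set (ℕ → Bool) :=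
  {χ | {n | χ n = true} ∈ F}

/-- The increasing enumeration of `X ⊆ ℕ`. -/
noncomputable def enum (X : Set ℕ) : ℕ → ℕ := Nat.nth (· ∈ X)

/-- `g` eventually dominates `f`. -/
def EvDom (g f : ℕ → ℕ) : Prop := ∀ᶠ k in Filter.atTop, f k < g k

namespace Stmt0Aux

attribute [local instance] Classical.propDecidable

/-- first `k` values of `m` as a list -/
def pref (m : ℕ → ℕ) (k : ℕ) : List ℕ := (List.range k).map m

@[simp] lemma pref_length (m : ℕ → ℕ) (k : ℕ) : (pref m k).length = k := by
  simp [pref]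

lemma twoFollow_eq (σ : Strat) (m : ℕ → ℕ) (k : ℕ) :
    twoFollow σ m k = σ (pref m (k + 1)) := by
  unfold twoFollow
  congr 1
  apply List.ext_getElem
  · simp [pref]
  · intro n h1 h2
    simp only [List.getElem_ofFn, pref, List.getElem_map, List.getElem_range]

variable (σ : Strat)

/-- TWO's possible responses at position `p` are bounded. -/
def Bdd (p : List ℕ) : Prop := ∃ B, ∀ j, σ (p ++ [j]) ≤ B

/-- at a bounded position, a move at least as large as every possible response -/
noncomputable def ruleMove (p : List ℕ) : ℕ := if h : Bdd σ p then h.choose else 0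

lemma ruleMove_spec {p : List ℕ} (h : Bdd σ p) :
    σ (p ++ [ruleMove σ p]) ≤ ruleMove σ p := by
  rw [ruleMove, dif_pos h]
  exact h.choose_spec _

/-- a move forcing a response above `M`, usable at an unbounded position -/
noncomputable def jmp (p : List ℕ) (M : ℕ) : ℕ :=
  if h : ∃ j, M < σ (p ++ [j]) then h.choose else 0

lemma jmp_spec {p : List ℕ} (h : ¬ Bdd σ p) (M : ℕ) :
    M < σ (p ++ [jmp σ p M]) := by
  have h' : ∃ j, M < σ (p ++ [j]) := by
    rw [Bdd] at h
    push_neg at h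
    obtain ⟨j, hj⟩ := h M
    exact ⟨j, hj⟩
  rw [jmp, dif_pos h']
  exact h'.choose_spec

/-- the iterated rule-play extending `p₀` -/
noncomputable def rp (p₀ : List ℕ) : ℕ → List ℕ
  | 0 => p₀
  | n + 1 => rp p₀ n ++ [ruleMove σ (rp p₀ n)]

@[simp] lemma rp_length (p₀ : List ℕ) (n : ℕ) : (rp σ p₀ n).length = p₀.length + n := by
  induction n with
  | zero => rfl
  | succ n ih => simp [rp, ih]; omega

lemma rp_prefix (p₀ : List ℕ) {i j : ℕ} (h : i ≤ j) : rp σ p₀ i <+: rp σ p₀ j := by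
  induction j with
  | zero => simp_all
  | succ j ih =>
    rcases Nat.eq_or_lt_of_le h with rfl | h'
    · exact List.prefix_refl _
    · exact (ih (Nat.lt_succ_iff.mp h')).trans (List.prefix_append _ _)

/-- the limit play of a prefix-chain of positions -/
noncomputable def climit (c : ℕ → List ℕ) (k : ℕ) : ℕ := (c (k + 1)).getD k 0

lemma getD_of_prefix {l₁ l₂ : List ℕ} (h : l₁ <+: l₂) {k : ℕ} (hk : k < l₁.length) :
    l₂.getD k 0 = l₁.getD k 0 := by
  obtain ⟨t, rfl⟩ := h
  rw [List.getD_eq_getElem _ _ (by simp; omega), List.getD_eq_getElem _ _ hk]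
  exact List.getElem_append_left hk

lemma climit_spec {c : ℕ → List ℕ} (hc : ∀ i j, i ≤ j → c i <+: c j)
    (hl : ∀ n, n ≤ (c n).length) {k n : ℕ} (hk : k < (c n).length) :
    climit c k = (c n).getD k 0 := by
  rcases le_total (k + 1) n with h | h
  · exact (getD_of_prefix (hc _ _ h) (lt_of_lt_of_le (Nat.lt_succ_self k) (hl (k + 1)))).symm
  · exact getD_of_prefix (hc _ _ h) hk

lemma pref_climit {c : ℕ → List ℕ} (hc : ∀ i j, i ≤ j → c i <+: c j)
    (hl : ∀ n, n ≤ (c n).length) {J n : ℕ} (hJ : J ≤ (c n).length) :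
    pref (climit c) J = (c n).take J := by
  apply List.ext_getElem
  · simp [Nat.min_eq_left hJ]
  · intro i h1 h2
    simp only [pref, List.getElem_map, List.getElem_range, List.getElem_take]
    have hi : i < J := by simpa using h1
    rw [climit_spec hc hl (lt_of_lt_of_le hi hJ),
      List.getD_eq_getElem _ _ (lt_of_lt_of_le hi hJ)]

variable {F : Set (Set ℕ)}

/-- key use of the i.o.-domination clause: the rule-play must hit an unbounded
position, since at bounded positions TWO's response does not exceed ONE's move. -/
lemma rp_exists_free (hσ : TwoWinning1 F σ) (p₀ : List ℕ) :
    ∃ n, ¬ Bdd σ (rp σ p₀ n) := by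
  by_contra hall
  push_neg at hall
  set c : ℕ → List ℕ := rp σ p₀ with hc
  have hchain : ∀ i j, i ≤ j → c i <+: c j := fun i j h => rp_prefix σ p₀ h
  have hlen : ∀ n, n ≤ (c n).length := fun n => by simp [hc]
  set x : ℕ → ℕ := climit c with hx
  obtain ⟨k, hk, hlt⟩ := (hσ x).2.1 p₀.length
  set n : ℕ := k - p₀.length with hn
  have hkn : k = p₀.length + n := by omega
  have hlen1 : (c (n + 1)).length = k + 1 := by simp [hc]; omega
  have h1 : twoFollow σ x k = σ (c (n + 1)) := by
    rw [twoFollow_eq]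
    congr 1
    rw [pref_climit hchain hlen (le_of_eq hlen1.symm)]
    exact List.take_of_length_le (le_of_eq hlen1)
  have h2 : x k = ruleMove σ (c n) := by
    have hkey : climit c k = (c (n + 1)).getD k 0 :=
      climit_spec hchain hlen (by rw [hlen1]; omega)
    rw [hx, hkey]
    have hcsucc : c (n + 1) = c n ++ [ruleMove σ (c n)] := rfl
    rw [hcsucc, List.getD_append_right _ _ _ _ (by simp [hc]; omega)]
    have h0 : k - (c n).length = 0 := by simp [hc]; omega
    rw [h0]
    rfl
  have h3 : σ (c (n + 1)) ≤ ruleMove σ (c n) := by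
    have hcsucc : c (n + 1) = c n ++ [ruleMove σ (c n)] := rfl
    rw [hcsucc]
    exact ruleMove_spec σ (hall n)
  rw [h1, h2] at hlt
  omega

/-- index of the first unbounded position on the rule-play -/
noncomputable def reachIdx (p₀ : List ℕ) : ℕ :=
  if h : ∃ n, ¬ Bdd σ (rp σ p₀ n) then Nat.find h else 0

/-- the first unbounded position on the rule-play extending `p₀` -/
noncomputable def reach (p₀ : List ℕ) : List ℕ := rp σ p₀ (reachIdx σ p₀)

lemma reach_prefix (p₀ : List ℕ) : p₀ <+: reach σ p₀ :=
  rp_prefix σ p₀ (Nat.zero_le _)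

lemma reach_free (hσ : TwoWinning1 F σ) (p₀ : List ℕ) : ¬ Bdd σ (reach σ p₀) := by
  have h := rp_exists_free σ hσ p₀
  rw [reach, reachIdx, dif_pos h]
  exact Nat.find_spec h

/-- max over all of TWO's responses along position `p` -/
noncomputable def mResp (p : List ℕ) : ℕ :=
  (Finset.range p.length).sup fun k => σ (p.take (k + 1))

lemma le_mResp {p : List ℕ} {k : ℕ} (h : k < p.length) :
    σ (p.take (k + 1)) ≤ mResp σ p :=
  Finset.le_sup (f := fun k => σ (p.take (k + 1))) (Finset.mem_range.mpr h)

/-- one macro-step of the two-plays construction: each play jumps above the maximum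
of all responses produced so far in both plays, then proceeds to its next
unbounded position. -/
noncomputable def stepPair (ab : List ℕ × List ℕ) : List ℕ × List ℕ :=
  (reach σ (ab.1 ++ [jmp σ ab.1 (max (mResp σ ab.1) (mResp σ ab.2))]),
   reach σ (ab.2 ++ [jmp σ ab.2
     (max (mResp σ (reach σ (ab.1 ++ [jmp σ ab.1 (max (mResp σ ab.1) (mResp σ ab.2))])))
       (mResp σ ab.2))]))

noncomputable def AB (n : ℕ) : List ℕ × List ℕ := (stepPair σ)^[n] (reach σ [], reach σ [])

noncomputable def aP (n : ℕ) : List ℕ := (AB σ n).1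
noncomputable def bP (n : ℕ) : List ℕ := (AB σ n).2

noncomputable def MX (n : ℕ) : ℕ := max (mResp σ (aP σ n)) (mResp σ (bP σ n))
noncomputable def MY (n : ℕ) : ℕ := max (mResp σ (aP σ (n + 1))) (mResp σ (bP σ n))

lemma ab_zero : aP σ 0 = bP σ 0 := rfl

lemma aP_succ (n : ℕ) :
    aP σ (n + 1) = reach σ (aP σ n ++ [jmp σ (aP σ n) (MX σ n)]) := by
  show ((stepPair σ)^[n + 1] _).1 = _
  rw [Function.iterate_succ_apply']
  rfl

lemma bP_succ (n : ℕ) :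
    bP σ (n + 1) = reach σ (bP σ n ++ [jmp σ (bP σ n) (MY σ n)]) := by
  have ha := aP_succ σ n
  show ((stepPair σ)^[n + 1] _).2 = _
  rw [Function.iterate_succ_apply']
  show reach σ ((AB σ n).2 ++ [jmp σ (AB σ n).2 _]) = _
  rw [MY, ha]
  rfl

lemma free_a (hσ : TwoWinning1 F σ) (n : ℕ) : ¬ Bdd σ (aP σ n) := by
  cases n with
  | zero => exact reach_free σ hσ []
  | succ n => rw [aP_succ]; exact reach_free σ hσ _

lemma free_b (hσ : TwoWinning1 F σ) (n : ℕ) : ¬ Bdd σ (bP σ n) := by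
  cases n with
  | zero => exact reach_free σ hσ []
  | succ n => rw [bP_succ]; exact reach_free σ hσ _

lemma aP_prefix_succ (n : ℕ) :
    aP σ n ++ [jmp σ (aP σ n) (MX σ n)] <+: aP σ (n + 1) := by
  rw [aP_succ]; exact reach_prefix σ _

lemma bP_prefix_succ (n : ℕ) :
    bP σ n ++ [jmp σ (bP σ n) (MY σ n)] <+: bP σ (n + 1) := by
  rw [bP_succ]; exact reach_prefix σ _

lemma len_aP_lt (n : ℕ) : (aP σ n).length < (aP σ (n + 1)).length := by
  have := (aP_prefix_succ σ n).length_le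
  simp at this
  omega

lemma len_bP_lt (n : ℕ) : (bP σ n).length < (bP σ (n + 1)).length := by
  have := (bP_prefix_succ σ n).length_le
  simp at this
  omega

lemma chain_a : ∀ i j, i ≤ j → aP σ i <+: aP σ j := by
  intro i j h
  induction j with
  | zero => simp_all
  | succ j ih =>
    rcases Nat.eq_or_lt_of_le h with rfl | h'
    · exact List.prefix_refl _
    · exact (ih (Nat.lt_succ_iff.mp h')).trans
        ((List.prefix_append _ _).trans (aP_prefix_succ σ j))

lemma chain_b : ∀ i j, i ≤ j → bP σ i <+: bP σ j := by
  intro i j h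
  induction j with
  | zero => simp_all
  | succ j ih =>
    rcases Nat.eq_or_lt_of_le h with rfl | h'
    · exact List.prefix_refl _
    · exact (ih (Nat.lt_succ_iff.mp h')).trans
        ((List.prefix_append _ _).trans (bP_prefix_succ σ j))

lemma len_a_ge (n : ℕ) : n ≤ (aP σ n).length := by
  induction n with
  | zero => exact Nat.zero_le _
  | succ n ih => have := len_aP_lt σ n; omega

lemma len_b_ge (n : ℕ) : n ≤ (bP σ n).length := by
  induction n with
  | zero => exact Nat.zero_le _
  | succ n ih => have := len_bP_lt σ n; omega

/-- response of the limit play `x` at a round inside position `aP n` -/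
lemma resp_a {k n : ℕ} (h : k < (aP σ n).length) :
    twoFollow σ (climit (aP σ)) k = σ ((aP σ n).take (k + 1)) := by
  rw [twoFollow_eq]
  congr 1
  exact pref_climit (chain_a σ) (len_a_ge σ) (by omega)

lemma resp_b {k n : ℕ} (h : k < (bP σ n).length) :
    twoFollow σ (climit (bP σ)) k = σ ((bP σ n).take (k + 1)) := by
  rw [twoFollow_eq]
  congr 1
  exact pref_climit (chain_b σ) (len_b_ge σ) (by omega)

lemma jumpval_a (n : ℕ) :
    twoFollow σ (climit (aP σ)) ((aP σ n).length)
      = σ (aP σ n ++ [jmp σ (aP σ n) (MX σ n)]) := by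
  have hp := aP_prefix_succ σ n
  have hlen : ((aP σ n) ++ [jmp σ (aP σ n) (MX σ n)]).length = (aP σ n).length + 1 := by simp
  have h : (aP σ n).length < (aP σ (n + 1)).length := len_aP_lt σ n
  rw [resp_a σ (n := n + 1) h]
  congr 1
  have := List.prefix_iff_eq_take.mp hp
  rw [hlen] at this
  exact this.symm

lemma jumpval_b (n : ℕ) :
    twoFollow σ (climit (bP σ)) ((bP σ n).length)
      = σ (bP σ n ++ [jmp σ (bP σ n) (MY σ n)]) := by
  have hp := bP_prefix_succ σ n
  have hlen : ((bP σ n) ++ [jmp σ (bP σ n) (MY σ n)]).length = (bP σ n).length + 1 := by simp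
  have h : (bP σ n).length < (bP σ (n + 1)).length := len_bP_lt σ n
  rw [resp_b σ (n := n + 1) h]
  congr 1
  have := List.prefix_iff_eq_take.mp hp
  rw [hlen] at this
  exact this.symm

/-- all responses of `x` from position `aP n` onward exceed `MX n` -/
lemma B1 (hσ : TwoWinning1 F σ) (n : ℕ) {k : ℕ} (h : (aP σ n).length ≤ k) :
    MX σ n < twoFollow σ (climit (aP σ)) k := by
  have h1 : MX σ n < twoFollow σ (climit (aP σ)) ((aP σ n).length) := by
    rw [jumpval_a]
    exact jmp_spec σ (free_a σ hσ n) _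
  exact lt_of_lt_of_le h1 ((hσ (climit (aP σ))).1.monotone h)

lemma B2 (hσ : TwoWinning1 F σ) (n : ℕ) {l : ℕ} (h : (bP σ n).length ≤ l) :
    MY σ n < twoFollow σ (climit (bP σ)) l := by
  have h1 : MY σ n < twoFollow σ (climit (bP σ)) ((bP σ n).length) := by
    rw [jumpval_b]
    exact jmp_spec σ (free_b σ hσ n) _
  exact lt_of_lt_of_le h1 ((hσ (climit (bP σ))).1.monotone h)

lemma dom_a {k n : ℕ} (h : k < (aP σ n).length) :
    twoFollow σ (climit (aP σ)) k ≤ mResp σ (aP σ n) := by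
  rw [resp_a σ h]
  exact le_mResp σ h

lemma dom_b {k n : ℕ} (h : k < (bP σ n).length) :
    twoFollow σ (climit (bP σ)) k ≤ mResp σ (bP σ n) := by
  rw [resp_b σ h]
  exact le_mResp σ h

lemma locate {L : ℕ → ℕ} (hL : ∀ n, L n < L (n + 1)) {k : ℕ} (h0 : L 0 ≤ k) :
    ∃ n, L n ≤ k ∧ k < L (n + 1) := by
  have hmono : StrictMono L := strictMono_nat_of_lt_succ hL
  have hbk : ∀ m, L m ≤ k → m ≤ k := fun m hm => le_trans hmono.le_apply hm
  set P : ℕ → Prop := fun n => L n ≤ k with hP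
  have h0' : P 0 := h0
  refine ⟨Nat.findGreatest P k, Nat.findGreatest_spec (P := P) (m := 0) (Nat.zero_le k) h0', ?_⟩
  by_contra hcon
  push_neg at hcon
  have h1 : P (Nat.findGreatest P k + 1) := hcon
  have h2 : Nat.findGreatest P k + 1 ≤ Nat.findGreatest P k :=
    Nat.le_findGreatest (hbk _ hcon) h1
  omega

/-- THE SEPARATION: beyond the common initial position, the two plays' responses
are pairwise distinct. -/
lemma sep (hσ : TwoWinning1 F σ) {k l : ℕ}
    (hk : (aP σ 0).length ≤ k) (hl : (aP σ 0).length ≤ l) :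
    twoFollow σ (climit (aP σ)) k ≠ twoFollow σ (climit (bP σ)) l := by
  obtain ⟨n, hn1, hn2⟩ := locate (fun n => len_aP_lt σ n) hk
  have hl' : (bP σ 0).length ≤ l := by rw [← ab_zero]; exact hl
  obtain ⟨m, hm1, hm2⟩ := locate (fun n => len_bP_lt σ n) hl'
  have hlenA : ∀ i j, i ≤ j → (aP σ i).length ≤ (aP σ j).length :=
    fun i j h => (chain_a σ i j h).length_le
  have hlenB : ∀ i j, i ≤ j → (bP σ i).length ≤ (bP σ j).length :=
    fun i j h => (chain_b σ i j h).length_le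
  rcases le_or_gt n m with h | h
  · have hky : k < (aP σ (m + 1)).length :=
      lt_of_lt_of_le hn2 (hlenA _ _ (by omega))
    have h2 : twoFollow σ (climit (aP σ)) k ≤ MY σ m :=
      le_trans (dom_a σ hky) (le_max_left _ _)
    have h1 : MY σ m < twoFollow σ (climit (bP σ)) l := B2 σ hσ m hm1
    omega
  · have hly : l < (bP σ n).length :=
      lt_of_lt_of_le hm2 (hlenB _ _ (by omega))
    have h2 : twoFollow σ (climit (bP σ)) l ≤ MX σ n :=
      le_trans (dom_b σ hly) (le_max_right _ _)
    have h1 : MX σ n < twoFollow σ (climit (aP σ)) k := B1 σ hσ n hn1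
    omega

end Stmt0Aux

/-- TWO does not have a winning strategy in `G1(F)`. -/
theorem stmt0 (F : Set (Set ℕ)) (hF : IsNPFilter F) :
    ¬ ∃ σ : Strat, TwoWinning1 F σ := by
  rintro ⟨σ, hσ⟩
  open Stmt0Aux in
  have hxF : Set.range (twoFollow σ (climit (aP σ))) ∈ F := (hσ _).2.2
  have hyF : Set.range (twoFollow σ (climit (bP σ))) ∈ F := (hσ _).2.2
  have hmem := hF.2.1 _ hxF _ hyF
  have hinf := hF.2.2 _ hmem
  set L0 := (Stmt0Aux.aP σ 0).length with hL0
  have hsub : (Set.range (twoFollow σ (Stmt0Aux.climit (Stmt0Aux.aP σ)))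
      ∩ Set.range (twoFollow σ (Stmt0Aux.climit (Stmt0Aux.bP σ))))
      ⊆ (twoFollow σ (Stmt0Aux.climit (Stmt0Aux.aP σ))) '' (Set.Iio L0) := by
    rintro v ⟨⟨k, rfl⟩, ⟨l, hlv⟩⟩
    by_cases hk0 : k < L0
    · exact ⟨k, hk0, rfl⟩
    · by_cases hl0 : l < L0
      · refine ⟨l, hl0, ?_⟩
        have hbl0 : l < (Stmt0Aux.bP σ 0).length := by
          rw [← Stmt0Aux.ab_zero]; exact hl0
        rw [Stmt0Aux.resp_a σ (n := 0) hl0, ← hlv, Stmt0Aux.resp_b σ (n := 0) hbl0,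
          ← Stmt0Aux.ab_zero]
      · exact absurd hlv.symm (Stmt0Aux.sep σ hσ (not_lt.1 hk0) (not_lt.1 hl0))
  exact hinf (((Set.finite_Iio L0).image _).subset hsub)
end

section
/- If F is a meager filter on ℕ, then player ONE has a winning strategy in the game G1(F). -/
/-!
A meagre set `A ⊆ αᴺ` (`α` finite) is avoided by a block pattern: there are blocks
`[e k, e (k + 1))` and a word `x` such that every element of `A` agrees with `x` on only
finitely many blocks. Indeed, writing `Aᶜ ⊇ ⋂ₖ Uₖ` with `Uₖ` dense, open and decreasing,
the finitely many cylinders of length `e k` can all be pushed into `Uₖ` by one common word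
on the next block. When `A` codes an upward closed family `F`, adding `x` to a member of
`F` stays in `F`, so every member of `F` meets all but finitely many blocks.

ONE then answers a position whose moves sum to `b` with `e (b + 2)`. If TWO ever beats this
move after a late enough position, the block `[e (b + 1), e (b + 2))` contains none of
TWO's moves: the earlier ones are at most `b`, the later ones exceed `e (b + 2)`.
-/

open Filter Set

open PiNat

section BlockPattern

variable {α : Type*} [TopologicalSpace α] [DiscreteTopology α]

theorem Dense.exists_mem_cylinder_cylinder_subset {U : Set (ℕ → α)} (hUd : Dense U)
    (hUo : IsOpen U) (x : ℕ → α) (n : ℕ) :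
    ∃ y ∈ cylinder x n, ∃ N, n ≤ N ∧ cylinder y N ⊆ U := by
  obtain ⟨y, hyx, hyU⟩ :=
    hUd.inter_open_nonempty _ (isOpen_cylinder _ x n) ⟨x, self_mem_cylinder x n⟩
  obtain ⟨_, ⟨z, m, rfl⟩, hyz, hzU⟩ :=
    (isTopologicalBasis_cylinders _).exists_subset_of_mem_open hyU hUo
  refine ⟨y, hyx, max n m, le_max_left n m, ?_⟩
  calc cylinder y (max n m) ⊆ cylinder y m := cylinder_anti y (le_max_right n m)
    _ = cylinder z m := mem_cylinder_iff_eq.mp hyz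
    _ ⊆ U := hzU

variable [Nonempty α]

theorem Dense.exists_block_pattern_of_finite {U : Set (ℕ → α)} (hUd : Dense U)
    (hUo : IsOpen U) (n : ℕ) {S : Set (ℕ → α)} (hS : S.Finite) :
    ∃ N, n < N ∧ ∃ t : ℕ → α, ∀ χ, (∃ a ∈ S, χ ∈ cylinder a n) →
      (∀ i ∈ Ico n N, χ i = t i) → χ ∈ U := by
  classical
  induction S, hS using Set.Finite.induction_on with
  | empty => exact ⟨n + 1, lt_add_one n, Classical.arbitrary _, by simp⟩
  | @insert a S _ _ ih =>
    obtain ⟨N, hnN, t, ht⟩ := ih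
    obtain ⟨y, hy, N', hNN', hyU⟩ :=
      hUd.exists_mem_cylinder_cylinder_subset hUo ((Iio n).piecewise a t) N
    have hya : ∀ i < n, y i = a i := fun i hi => by
      simpa [hi] using mem_cylinder_iff.mp hy i (hi.trans hnN)
    have hyt : ∀ i ∈ Ico n N, y i = t i := fun i hi => by
      simpa [not_lt.mpr hi.1] using mem_cylinder_iff.mp hy i hi.2
    -- `y` follows `a` below `n` and `t` on `[n, N)`, so it replaces `t` for all of `insert a S`.
    refine ⟨N', hnN.trans_le hNN', y, ?_⟩
    rintro χ ⟨b, hb, hχb⟩ hχy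
    rcases hb with rfl | hb
    · refine hyU (mem_cylinder_iff.mpr fun i hi => ?_)
      rcases lt_or_ge i n with hin | hin
      · rw [mem_cylinder_iff.mp hχb i hin, hya i hin]
      · exact hχy i ⟨hin, hi⟩
    · exact ht χ ⟨b, hb, hχb⟩ fun i hi =>
        (hχy i ⟨hi.1, hi.2.trans_le hNN'⟩).trans (hyt i hi)

theorem Dense.exists_block_pattern [Finite α] {U : Set (ℕ → α)} (hUd : Dense U)
    (hUo : IsOpen U) (n : ℕ) :
    ∃ N, n < N ∧ ∃ t : ℕ → α, ∀ χ, (∀ i ∈ Ico n N, χ i = t i) → χ ∈ U := by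
  obtain ⟨S, hS⟩ := isCompact_univ.elim_finite_subcover (fun a => cylinder a n)
    (fun a => isOpen_cylinder (fun _ => α) a n)
    fun χ _ => mem_iUnion.mpr ⟨χ, self_mem_cylinder χ n⟩
  obtain ⟨N, hnN, t, ht⟩ := hUd.exists_block_pattern_of_finite hUo n S.finite_toSet
  refine ⟨N, hnN, t, fun χ hχ => ht χ ?_ hχ⟩
  simpa using hS (mem_univ χ)

end BlockPattern

theorem IsMeagre.exists_dense_isOpen_eventually_notMem {X : Type*} [TopologicalSpace X]
    [BaireSpace X] {A : Set X} (hA : IsMeagre A) :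
    ∃ U : ℕ → Set X, (∀ k, Dense (U k)) ∧ (∀ k, IsOpen (U k)) ∧
      ∀ x ∈ A, ∀ᶠ k in atTop, x ∉ U k := by
  obtain ⟨G, hGA, hG, hGd⟩ := mem_residual.mp hA
  obtain ⟨V, hVo, rfl⟩ := hG.eq_iInter_nat
  have hVd : ∀ i, Dense (V i) := fun i => hGd.mono (iInter_subset V i)
  refine ⟨fun k => ⋂ i ∈ Iic k, V i,
    fun k => dense_biInter_of_isOpen (fun i _ => hVo i) (finite_Iic k).countable fun i _ => hVd i,
    fun k => (finite_Iic k).isOpen_biInter fun i _ => hVo i, fun x hx => ?_⟩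
  obtain ⟨i, hi⟩ : ∃ i, x ∉ V i := by
    simpa using fun h : x ∈ ⋂ i, V i => hGA h hx
  filter_upwards [eventually_ge_atTop i] with k hik hxk
  exact hi (mem_iInter₂.mp hxk i hik)

theorem IsMeagre.exists_strictMono_pattern_eventually_ne {α : Type*} [TopologicalSpace α]
    [DiscreteTopology α] [Finite α] [Nonempty α] {A : Set (ℕ → α)} (hA : IsMeagre A) :
    ∃ e : ℕ → ℕ, StrictMono e ∧ ∃ x : ℕ → α,
      ∀ χ ∈ A, ∀ᶠ k in atTop, ∃ i ∈ Ico (e k) (e (k + 1)), χ i ≠ x i := by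
  classical
  obtain ⟨U, hUd, hUo, hAU⟩ := hA.exists_dense_isOpen_eventually_notMem
  choose N hN t ht using fun k n => (hUd k).exists_block_pattern (hUo k) n
  obtain ⟨e, he_succ⟩ : ∃ e : ℕ → ℕ, ∀ k, e (k + 1) = N k (e k) :=
    ⟨fun k => Nat.rec 0 (fun k ek => N k ek) k, fun _ => rfl⟩
  have he : StrictMono e := strictMono_nat_of_lt_succ fun k => he_succ k ▸ hN k (e k)
  have hblock : ∀ i, ∃ k, i < e (k + 1) := fun i => ⟨i, he.le_apply⟩
  have hblock_eq : ∀ k, ∀ i ∈ Ico (e k) (e (k + 1)), Nat.find (hblock i) = k :=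
    fun k i hi =>
    (Nat.find_eq_iff _).mpr ⟨hi.2, fun j hjk => not_lt.mpr ((he.monotone hjk).trans hi.1)⟩
  refine ⟨e, he, fun i => t (Nat.find (hblock i)) (e (Nat.find (hblock i))) i,
    fun χ hχ => (hAU χ hχ).mono fun k hk => ?_⟩
  by_contra! hagree
  refine hk (ht k (e k) χ fun i hi => ?_)
  rw [← he_succ] at hi
  simpa [hblock_eq k i hi] using hagree i hi

theorem exists_strictMono_eventually_inter_Ico_nonempty {F : Set (Set ℕ)}
    (hup : ∀ X ∈ F, ∀ Y : Set ℕ, X ⊆ Y → Y ∈ F) (hF : IsMeagre (cantorCoded F)) :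
    ∃ e : ℕ → ℕ, StrictMono e ∧
      ∀ X ∈ F, ∀ᶠ k in atTop, (X ∩ Ico (e k) (e (k + 1))).Nonempty := by
  classical
  obtain ⟨e, he, x, hx⟩ := hF.exists_strictMono_pattern_eventually_ne
  refine ⟨e, he, fun X hX => ?_⟩
  have hχ : (fun i => decide (i ∈ X) || x i) ∈ cantorCoded F :=
    hup X hX _ fun i hi => by simp [hi]
  filter_upwards [hx _ hχ] with k ⟨i, hi, hne⟩
  refine ⟨i, ?_, hi⟩
  by_contra hiX
  simp [hiX] at hne

theorem oneWinning1_of_eventually_inter_Ico_nonempty {F : Set (Set ℕ)} {e : ℕ → ℕ}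
    (he : StrictMono e)
    (hF : ∀ X ∈ F, ∀ᶠ k in atTop, (X ∩ Ico (e k) (e (k + 1))).Nonempty) :
    OneWinning1 F fun l => e (l.sum + 2) := by
  rintro n ⟨hn, hbeat, hrange⟩
  obtain ⟨K, hK⟩ := eventually_atTop.mp (hF _ hrange)
  obtain ⟨j, hj, hbeat_j⟩ := hbeat (K + 1)
  set b := (List.ofFn fun i : Fin j => n i).sum
  have hb : ∀ p < j, n p ≤ b := fun p hp =>
    List.le_sum_of_mem (List.mem_ofFn.mpr ⟨⟨p, hp⟩, rfl⟩)
  have hKb : K ≤ b := calc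
    K ≤ j - 1 := by omega
    _ ≤ n (j - 1) := hn.le_apply
    _ ≤ b := hb (j - 1) (by omega)
  obtain ⟨_, ⟨p, rfl⟩, hlo, hhi⟩ := hK (b + 1) (by omega)
  have hpj : p < j := hn.lt_iff_lt.mp (hhi.trans hbeat_j)
  have := hb p hpj
  have : b + 1 ≤ e (b + 1) := he.le_apply
  omega

/-- If `F` is meager then ONE has a winning strategy in `G1(F)`. -/
theorem stmt1 (F : Set (Set ℕ)) (hF : IsNPFilter F) (hmeager : IsMeagre (cantorCoded F)) :
    ∃ σ : Strat, OneWinning1 F σ := by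
  obtain ⟨e, he, hmeet⟩ := exists_strictMono_eventually_inter_Ico_nonempty hF.1 hmeager
  exact ⟨_, oneWinning1_of_eventually_inter_Ico_nonempty he hmeet⟩
end

section
/- If player ONE has a winning strategy in the game G1(F), then F is a meager filter on ℕ; equivalently, the family of enumeration functions of members of F is bounded with respect to eventual domination. -/
open Filter Set

/-!
Fix ONE's winning strategy `σ` and cut `ℕ` into blocks `[b i, b (i + 1))`, where `b (i + 1)`
exceeds every answer of `σ` to a position with at most `b i` moves, all below `b i`. If some
`X ∈ F` missed infinitely many blocks, TWO could play the increasing enumeration of `X`: at the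
first inning where TWO's move passes a missed block `i`, ONE has only seen moves below `b i`, so
ONE's move is below `b (i + 1)`, while TWO's move is not. TWO would then beat `σ`. Hence every
member of `F` meets almost all blocks, which is a meagre condition on `2^ℕ` and forces the
`j`-th element of the member to lie below `b (2 * j + 2)` for large `j`.
-/

def listsBelow (c : ℕ) : Finset (List ℕ) :=
  (Finset.range (c + 1)).biUnion fun L =>
    (Finset.univ : Finset (Fin L → Fin c)).image fun f => List.ofFn fun i => (f i : ℕ)

lemma mem_listsBelow {c : ℕ} {l : List ℕ} (hlen : l.length ≤ c) (hlt : ∀ x ∈ l, x < c) :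
    l ∈ listsBelow c := by
  rw [listsBelow, Finset.mem_biUnion]
  refine ⟨l.length, Finset.mem_range.2 (Nat.lt_succ_of_le hlen), Finset.mem_image.2 ?_⟩
  exact ⟨fun i => ⟨l.get i, hlt _ (l.get_mem i)⟩, Finset.mem_univ _, List.ofFn_get l⟩

def blockEnd (σ : Strat) : ℕ → ℕ
  | 0 => 0
  | i + 1 => (listsBelow (blockEnd σ i)).sup σ + blockEnd σ i + 1

lemma blockEnd_strictMono (σ : Strat) : StrictMono (blockEnd σ) :=
  strictMono_nat_of_lt_succ fun i => by simp [blockEnd]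

lemma strat_lt_blockEnd_succ {σ : Strat} {l : List ℕ} {i : ℕ}
    (hlen : l.length ≤ blockEnd σ i) (hlt : ∀ x ∈ l, x < blockEnd σ i) :
    σ l < blockEnd σ (i + 1) := by
  have := Finset.le_sup (f := σ) (mem_listsBelow hlen hlt)
  simp only [blockEnd]
  omega

lemma oneFollow_nth_count_lt_blockEnd_succ (σ : Strat) (p : ℕ → Prop) [DecidablePred p]
    (i : ℕ) : oneFollow σ (Nat.nth p) (Nat.count p (blockEnd σ i)) < blockEnd σ (i + 1) := by
  apply strat_lt_blockEnd_succ
  · simpa using Nat.count_le _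
  · simp only [List.mem_ofFn]
    rintro _ ⟨j, rfl⟩
    exact Nat.nth_lt_of_lt_count j.isLt

def MeetsAlmostAllBlocks (b : ℕ → ℕ) (X : Set ℕ) : Prop :=
  ∀ᶠ i in atTop, (X ∩ Ico (b i) (b (i + 1))).Nonempty

theorem OneWinning1.meetsAlmostAllBlocks {F : Set (Set ℕ)} {σ : Strat} (hσ : OneWinning1 F σ)
    {X : Set ℕ} (hX : X ∈ F) (hinf : X.Infinite) : MeetsAlmostAllBlocks (blockEnd σ) X := by
  classical
  by_contra hmiss
  rw [MeetsAlmostAllBlocks, not_eventually, frequently_atTop] at hmiss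
  refine hσ (Nat.nth (· ∈ X))
    ⟨Nat.nth_strictMono hinf, fun N => ?_, by rwa [Nat.range_nth_of_infinite (p := (· ∈ X)) hinf]⟩
  obtain ⟨i, hi, hgap⟩ := hmiss (Nat.nth (· ∈ X) N + 1)
  refine ⟨Nat.count (· ∈ X) (blockEnd σ i), ?_, ?_⟩
  · refine ((Nat.lt_nth_iff_count_lt (p := (· ∈ X)) hinf).2 ?_).le
    exact (Nat.lt_succ_self _).trans_le (hi.trans (blockEnd_strictMono σ).le_apply)
  · refine (oneFollow_nth_count_lt_blockEnd_succ σ _ i).trans_le (not_lt.1 fun h => hgap ?_)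
    exact ⟨_, Nat.nth_mem_of_infinite hinf _, Nat.le_nth_count (p := (· ∈ X)) hinf _, h⟩

lemma isClosed_setOf_nonempty_inter_Ico (a c : ℕ) :
    IsClosed {χ : ℕ → Bool | ({n | χ n = true} ∩ Ico a c).Nonempty} := by
  have : {χ : ℕ → Bool | ({n | χ n = true} ∩ Ico a c).Nonempty} =
      ⋃ n ∈ Ico a c, {χ | χ n = true} := by
    ext χ
    simp [Set.Nonempty, and_comm]
  rw [this]
  exact (finite_Ico a c).isClosed_biUnion fun n _ =>
    isClosed_eq (continuous_apply n) continuous_const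

lemma isMeagre_setOf_meetsAlmostAllBlocks {b : ℕ → ℕ} (hb : Tendsto b atTop atTop) :
    IsMeagre {χ : ℕ → Bool | MeetsAlmostAllBlocks b {n | χ n = true}} := by
  have hunion : {χ : ℕ → Bool | MeetsAlmostAllBlocks b {n | χ n = true}} =
      ⋃ N, {χ : ℕ → Bool | ∀ i ≥ N, ({n | χ n = true} ∩ Ico (b i) (b (i + 1))).Nonempty} := by
    ext χ
    simp [MeetsAlmostAllBlocks, eventually_atTop]
  rw [hunion]
  refine isMeagre_iUnion fun N => IsNowhereDense.isMeagre ?_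
  have hclosed : IsClosed
      {χ : ℕ → Bool | ∀ i ≥ N, ({n | χ n = true} ∩ Ico (b i) (b (i + 1))).Nonempty} := by
    simp only [ofPred_forall]
    exact isClosed_biInter fun i _ => isClosed_setOf_nonempty_inter_Ico _ _
  refine (isClosed_isNowhereDense_iff_compl.2 ⟨hclosed.isOpen_compl, fun χ => ?_⟩).2
  -- `χ` is the limit of its truncations, each of which misses the blocks beyond its support
  refine mem_closure_of_tendsto (f := fun k n => decide (n < k) && χ n) (b := atTop) ?_
    (Eventually.of_forall fun k hk => ?_)
  · exact tendsto_pi_nhds.2 fun n => tendsto_const_nhds.congr'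
      ((eventually_gt_atTop n).mono fun k hk => by simp [hk])
  · obtain ⟨i, hki, hNi⟩ := ((hb.eventually_ge_atTop k).and (eventually_ge_atTop N)).exists
    obtain ⟨n, hn, hin⟩ := hk i hNi
    simp only [mem_ofPred_eq, Bool.and_eq_true, decide_eq_true_eq] at hn
    exact absurd hin.1 (by omega)

lemma le_count_of_forall_nonempty_inter_Ico {b : ℕ → ℕ} {X : Set ℕ} [DecidablePred (· ∈ X)]
    {I : ℕ} (h : ∀ i ≥ I, (X ∩ Ico (b i) (b (i + 1))).Nonempty) (j : ℕ) :
    j ≤ Nat.count (· ∈ X) (b (I + j)) := by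
  induction j with
  | zero => exact Nat.zero_le _
  | succ j ih =>
    obtain ⟨x, hxX, hbx, hxb⟩ := h (I + j) (Nat.le_add_right I j)
    calc j + 1 ≤ Nat.count (· ∈ X) x + 1 := by grw [ih, Nat.count_monotone _ hbx]
      _ ≤ Nat.count (· ∈ X) (b (I + (j + 1))) := Nat.count_strict_mono hxX hxb

lemma MeetsAlmostAllBlocks.evDom {b : ℕ → ℕ} (hb : Monotone b) {X : Set ℕ}
    (hX : MeetsAlmostAllBlocks b X) : EvDom (fun j => b (2 * j + 2)) (enum X) := by
  classical
  obtain ⟨I, hI⟩ := eventually_atTop.1 hX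
  filter_upwards [eventually_ge_atTop I] with j hj
  calc enum X j < b (I + (j + 1)) :=
        Nat.nth_lt_of_lt_count (le_count_of_forall_nonempty_inter_Ico hI (j + 1))
    _ ≤ b (2 * j + 2) := hb (by omega)

/-- If ONE has a winning strategy in `G1(F)` then `F` is meager; equivalently, the
enumeration functions of members of `F` are bounded under eventual domination. -/
theorem stmt2 (F : Set (Set ℕ)) (hF : IsNPFilter F) (σ : Strat) (hσ : OneWinning1 F σ) :
    IsMeagre (cantorCoded F) ∧ ∃ g : ℕ → ℕ, ∀ X ∈ F, EvDom g (enum X) := by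
  have hmeets (X : Set ℕ) (hX : X ∈ F) : MeetsAlmostAllBlocks (blockEnd σ) X :=
    hσ.meetsAlmostAllBlocks hX (hF.2.2 X hX)
  have hmono := blockEnd_strictMono σ
  exact ⟨(isMeagre_setOf_meetsAlmostAllBlocks hmono.tendsto_atTop).mono fun χ hχ => hmeets _ hχ,
    _, fun X hX => (hmeets X hX).evDom hmono.monotone⟩
end

section
/- For a non-principal filter F on ℕ the following are equivalent: (1) F is meager; (2) ONE has a winning strategy in G1(F); (3) the game G1(F) is determined. -/
open Filter Set

/-!
An upward closed family `G ⊆ 𝒫 ℕ` is meagre in `2^ℕ` iff for some intervals `[K i, K (i + 1))`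
every member of `G` meets all but finitely many of them (Talagrand). Given such intervals, ONE wins
by answering TWO's last move `v` with `K (v + 2)`, since every inning TWO wins skips an interval.
Conversely, ONE's answers to short histories of small moves are bounded; this yields intervals, and
a member of `F` missing infinitely many of them would, enumerated by TWO, beat ONE.

TWO never wins: the supersets of the outcomes of a strategy `σ` of TWO form an analytic, hence
Baire-measurable, family (Lusin–Sierpiński) any two members of which meet in an infinite set. Such
a family is meagre, as it cannot be comeagre in a cylinder that flipping all later bits preserves.
So ONE beats `σ`.
-/

open Topology MeasureTheory PiNat

namespace PiNat

variable {E : ℕ → Type*} [∀ n, TopologicalSpace (E n)] [∀ n, DiscreteTopology (E n)]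

theorem exists_cylinder_subset {x : ∀ n, E n} {U : Set (∀ n, E n)} (hU : U ∈ 𝓝 x) :
    ∃ n, cylinder x n ⊆ U := by
  obtain ⟨V, hVU, hV, hxV⟩ := mem_nhds_iff.1 hU
  obtain ⟨_, ⟨y, n, rfl⟩, hx, hyV⟩ :=
    (isTopologicalBasis_cylinders E).exists_subset_of_mem_open hxV hV
  exact ⟨n, (mem_cylinder_iff_eq.1 hx).trans_subset (hyV.trans hVU)⟩

theorem eq_of_forall_mem_closure_image_cylinder {X : Type*} [TopologicalSpace X] [T2Space X]
    {f : (∀ n, E n) → X} {x : ∀ n, E n} {y : X} (hf : ContinuousAt f x)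
    (hy : ∀ n, y ∈ closure (f '' cylinder x n)) : f x = y := by
  by_contra hne
  obtain ⟨u, v, hu, hv, hxu, hyv, huv⟩ := t2_separation hne
  obtain ⟨n, hn⟩ := exists_cylinder_subset (hf.preimage_mem_nhds (hu.mem_nhds hxu))
  have : closure (f '' cylinder x n) ⊆ vᶜ :=
    closure_minimal ((image_subset_iff.2 hn).trans huv.subset_compl_right) hv.isClosed_compl
  exact this (hy n) hyv

theorem setOf_res_eq_iUnion {α : Type*} (s : List α) :
    {z : ℕ → α | res z s.length = s} = ⋃ a, {z | res z (a :: s).length = a :: s} := by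
  ext z
  simp [res_succ, eq_comm]

theorem exists_forall_res {α : Type*} {P : List α → Prop} (h0 : P [])
    (hstep : ∀ s, P s → ∃ a, P (a :: s)) : ∃ x : ℕ → α, ∀ n, P (res x n) := by
  choose next hnext using fun s : {s // P s} => hstep s.1 s.2
  let b : ℕ → {s // P s} := fun n => Nat.rec ⟨[], h0⟩ (fun _ s => ⟨next s :: s.1, hnext s⟩) n
  refine ⟨fun n => next (b n), fun n => ?_⟩
  have : res (fun n => next (b n)) n = (b n).1 := by
    induction n with
    | zero => rfl
    | succ n ih => rw [res_succ, ih]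
  exact this ▸ (b n).2

end PiNat

section BaireHull

variable {X : Type*} [TopologicalSpace X]

def meagreLocus (Z : Set X) : Set X := ⋃₀ {U | IsOpen U ∧ IsMeagre (Z ∩ U)}

def baireHull (Z : Set X) : Set X := Z ∪ (meagreLocus Z)ᶜ

theorem isOpen_meagreLocus (Z : Set X) : IsOpen (meagreLocus Z) :=
  isOpen_sUnion fun _ hU => hU.1

theorem isMeagre_inter_meagreLocus [SecondCountableTopology X] (Z : Set X) :
    IsMeagre (Z ∩ meagreLocus Z) := by
  obtain ⟨T, hTc, hTS, hT⟩ := TopologicalSpace.isOpen_sUnion_countable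
    {U | IsOpen U ∧ IsMeagre (Z ∩ U)} fun _ hU => hU.1
  rw [meagreLocus, ← hT, sUnion_eq_biUnion, inter_iUnion₂]
  exact isMeagre_biUnion hTc fun U hU => (hTS hU).2

theorem subset_baireHull (Z : Set X) : Z ⊆ baireHull Z := subset_union_left

theorem baireMeasurableSet_baireHull [SecondCountableTopology X] (Z : Set X) :
    BaireMeasurableSet (baireHull Z) := by
  have : baireHull Z = (Z ∩ meagreLocus Z) ∪ (meagreLocus Z)ᶜ := by
    ext x
    by_cases hx : x ∈ meagreLocus Z <;> simp [baireHull, hx]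
  rw [this]
  exact (isMeagre_inter_meagreLocus Z).baireMeasurableSet.union
    (isOpen_meagreLocus Z).baireMeasurableSet.compl

theorem isMeagre_baireHull_diff {Z B : Set X} (hB : BaireMeasurableSet B) (hZB : Z ⊆ B) :
    IsMeagre (baireHull Z \ B) := by
  set L := meagreLocus Z
  obtain ⟨W, hW, hLW⟩ := ((isOpen_meagreLocus Z).baireMeasurableSet.compl.diff hB).residualEq_isOpen
  rw [eventuallyEq_set] at hLW
  have hWL : W ⊆ L := by
    refine subset_sUnion_of_mem ⟨hW, ?_⟩
    filter_upwards [hLW] with x hx ⟨hxZ, hxW⟩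
    exact (hx.2 hxW).2 (hZB hxZ)
  have hsub : baireHull Z \ B ⊆ Lᶜ \ B := fun x ⟨hx, hxB⟩ =>
    ⟨hx.resolve_left fun hxZ => hxB (hZB hxZ), hxB⟩
  refine IsMeagre.mono hsub ?_
  filter_upwards [hLW] with x hx hxL
  exact hxL.1 (hWL (hx.1 hxL))

end BaireHull

section AnalyticSet

variable {X : Type*} [TopologicalSpace X] [SecondCountableTopology X] [T2Space X]

/- `A s` is the image of the basic set of Baire space with reversed prefix `s`, and `E s` a
Baire-measurable hull of `A s` inside its closure. A point of `E []` outside the meagre set `M`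
lies in `E (res x n)` for all `n` along some branch `x`, hence it is `f x`. -/
theorem baireMeasurableSet_range {f : (ℕ → ℕ) → X} (hf : Continuous f) :
    BaireMeasurableSet (range f) := by
  set A : List ℕ → Set X := fun s => f '' {z | res z s.length = s}
  set E : List ℕ → Set X := fun s => baireHull (A s) ∩ closure (A s)
  have hE : ∀ s, BaireMeasurableSet (E s) := fun s =>
    (baireMeasurableSet_baireHull _).inter isClosed_closure.isOpen_compl.baireMeasurableSet.of_compl
  have hAE : ∀ s, A s ⊆ ⋃ a, E (a :: s) := fun s => by
    simp only [A, setOf_res_eq_iUnion s, image_iUnion]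
    exact iUnion_mono fun a => subset_inter (subset_baireHull _) subset_closure
  set M := ⋃ s, E s \ ⋃ a, E (a :: s)
  have hM : IsMeagre M := isMeagre_iUnion fun s =>
    (isMeagre_baireHull_diff (.iUnion fun a => hE _) (hAE s)).mono
      (sdiff_subset_sdiff_left inter_subset_left)
  have hrange : range f ⊆ E [] := by
    have hA : A [] = range f := by simp [A]
    exact hA ▸ subset_inter (subset_baireHull _) subset_closure
  have hcore : E [] \ M ⊆ range f := by
    rintro y ⟨hy, hyM⟩
    have hstep : ∀ s, y ∈ E s → ∃ a, y ∈ E (a :: s) := fun s hs => by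
      by_contra! h
      exact hyM (mem_iUnion.2 ⟨s, hs, by simpa using h⟩)
    obtain ⟨x, hx⟩ := exists_forall_res hy hstep
    refine ⟨x, eq_of_forall_mem_closure_image_cylinder hf.continuousAt fun n => ?_⟩
    simpa [E, A, cylinder_eq_res, res_length] using (hx n).2
  refine (hE []).diff hM.baireMeasurableSet |>.congr ?_
  rw [eventuallyEq_set]
  filter_upwards [hM] with y hy
  exact ⟨fun h => hcore h, fun h => ⟨hrange h, hy⟩⟩

theorem MeasureTheory.AnalyticSet.baireMeasurableSet {s : Set X} (hs : AnalyticSet s) :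
    BaireMeasurableSet s := by
  rw [AnalyticSet_def] at hs
  obtain rfl | ⟨f, hf, rfl⟩ := hs
  · exact isOpen_empty.baireMeasurableSet
  · exact baireMeasurableSet_range hf

end AnalyticSet

theorem IsMeagre.exists_dense_open_eventually_notMem {X : Type*} [TopologicalSpace X]
    [BaireSpace X] {A : Set X} (hA : IsMeagre A) :
    ∃ D : ℕ → Set X, (∀ n, IsOpen (D n)) ∧ (∀ n, Dense (D n)) ∧
      ∀ x ∈ A, ∀ᶠ n in atTop, x ∉ D n := by
  obtain ⟨t, htA, htG, htd⟩ := mem_residual.1 hA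
  obtain ⟨f, hfo, rfl⟩ := isGδ_iff_eq_iInter_nat.1 htG
  refine ⟨fun n => ⋂ i ∈ Finset.range (n + 1), f i,
    fun n => isOpen_biInter_finset fun i _ => hfo i,
    fun n => htd.mono fun y hy => mem_iInter₂.2 fun i _ => mem_iInter.1 hy i, fun x hx => ?_⟩
  obtain ⟨i, hi⟩ : ∃ i, x ∉ f i := by simpa using fun h => htA h hx
  filter_upwards [eventually_ge_atTop i] with n hn hxn
  exact hi (mem_iInter₂.1 hxn i (Finset.mem_range.2 (by omega)))

section CantorSpace

/- In `ℕ → Bool`, with `Bool` the two-element Boolean ring, `t + χ` flips the bits of `χ` on the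
support of `t`. -/

theorem exists_window_subset {D : Set (ℕ → Bool)} (hDo : IsOpen D) (hDd : Dense D) (N : ℕ) :
    ∃ L > N, ∃ ξ : ℕ → Bool, ∀ χ : ℕ → Bool, (∀ j ∈ Ico N L, χ j = ξ j) → χ ∈ D := by
  let mask : Finset ℕ → ℕ → Bool := fun s j => decide (j ∈ s)
  set D' := ⋂ s ∈ (Finset.range N).powerset, (mask s + ·) ⁻¹' D
  have hD'o : IsOpen D' := isOpen_biInter_finset fun s _ => hDo.preimage (continuous_const_add _)
  have hD'd : Dense D' := dense_biInter_of_isOpen (fun s _ => hDo.preimage (continuous_const_add _))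
    (Finset.countable_toSet _) fun s _ => hDd.preimage (isOpenMap_add_left _)
  obtain ⟨ξ, hξ⟩ := hD'd.nonempty
  obtain ⟨L, hL⟩ := exists_cylinder_subset (hD'o.mem_nhds hξ)
  refine ⟨max L (N + 1), by omega, ξ, fun χ hχ => ?_⟩
  -- flipping the bits where `χ` and `ξ` differ below `N` lands in `cylinder ξ L ⊆ D'`
  set s := (Finset.range N).filter fun j => χ j ≠ ξ j
  have hcyl : mask s + χ ∈ cylinder ξ L := fun j hj => by
    have hjs : j ∈ s ↔ j < N ∧ χ j ≠ ξ j := by simp [s]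
    by_cases hjN : j < N
    · simp only [Pi.add_apply, mask, Bool.add_eq_xor, hjs, hjN, true_and]
      cases χ j <;> cases ξ j <;> decide
    · simp [mask, hjs, hjN, Bool.add_eq_xor, hχ j ⟨by omega, by omega⟩]
  have := mem_iInter₂.1 (hL hcyl) s (Finset.mem_powerset.2 (Finset.filter_subset _ _))
  -- `-mask s` is `mask s` by definition
  have hinv : mask s + (mask s + χ) = χ := neg_add_cancel_left (mask s) χ
  rwa [mem_preimage, hinv] at this

def HitsIntervals (G : Set (Set ℕ)) (K : ℕ → ℕ) : Prop :=
  ∀ X ∈ G, ∀ᶠ i in atTop, (X ∩ Ico (K i) (K (i + 1))).Nonempty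

open scoped Classical in
theorem exists_hitsIntervals_of_isMeagre {G : Set (Set ℕ)}
    (hup : ∀ X ∈ G, ∀ Y, X ⊆ Y → Y ∈ G) (hG : IsMeagre (cantorCoded G)) :
    ∃ K, StrictMono K ∧ HitsIntervals G K := by
  obtain ⟨D, hDo, hDd, hD⟩ := hG.exists_dense_open_eventually_notMem
  choose L hL ξ hξ using fun i => exists_window_subset (hDo i) (hDd i)
  -- `[K i, K (i + 1))` is the window for `D i` starting at `K i`
  set K : ℕ → ℕ := fun i => Nat.rec 0 L i
  have hK : StrictMono K := strictMono_nat_of_lt_succ fun i => hL i (K i)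
  refine ⟨K, hK, fun X hX => ?_⟩
  by_contra hmiss
  rw [not_eventually] at hmiss
  set I : ℕ → Set ℕ := fun i => Ico (K i) (K (i + 1))
  have hI : ∀ i i' j, j ∈ I i → j ∈ I i' → i = i' := fun i i' j ⟨h1, h2⟩ ⟨h1', h2'⟩ =>
    le_antisymm (Nat.lt_succ_iff.1 (hK.lt_iff_lt.1 (h1.trans_lt h2')))
      (Nat.lt_succ_iff.1 (hK.lt_iff_lt.1 (h1'.trans_lt h2)))
  -- fill every interval that `X` misses with the window chosen for it
  set Y := X ∪ {j | ∃ i, ¬ (X ∩ I i).Nonempty ∧ j ∈ I i ∧ ξ i (K i) j = true}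
  have hY : (fun j => decide (j ∈ Y)) ∈ cantorCoded G := by
    simpa [cantorCoded] using hup X hX Y subset_union_left
  obtain ⟨i, hi, hiD⟩ := (hmiss.and_eventually (hD _ hY)).exists
  refine hiD (hξ i (K i) _ fun j hj => ?_)
  have hjX : j ∉ X := fun hjX => hi ⟨j, hjX, hj⟩
  have hjY : j ∈ Y ↔ ξ i (K i) j = true := by
    simp only [Y, mem_union, mem_ofPred_eq, hjX, false_or]
    exact ⟨fun ⟨i', _, hj', h⟩ => hI i' i j hj' hj ▸ h, fun h => ⟨i, hi, hj, h⟩⟩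
  rwa [Bool.eq_iff_iff, decide_eq_true_iff]

theorem isMeagre_cantorCoded_of_hitsIntervals {G : Set (Set ℕ)} {K : ℕ → ℕ} (hK : StrictMono K)
    (hG : HitsIntervals G K) : IsMeagre (cantorCoded G) := by
  set C : ℕ → Set (ℕ → Bool) := fun N => ⋂ i ≥ N, ⋃ j ∈ Ico (K i) (K (i + 1)), {χ | χ j = true}
  have hsub : cantorCoded G ⊆ ⋃ N, C N := fun χ hχ => by
    obtain ⟨N, hN⟩ := (hG _ hχ).exists_forall_of_atTop
    simpa [C] using ⟨N, fun i hi => (hN i hi).imp fun j hj => ⟨hj.2, hj.1⟩⟩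
  refine (isMeagre_iUnion fun N => IsNowhereDense.isMeagre ?_).mono hsub
  have hC : IsClosed (C N) := isClosed_biInter fun i _ =>
    (finite_Ico _ _).isClosed_biUnion fun j _ => isClosed_eq (continuous_apply j) continuous_const
  rw [hC.isNowhereDense_iff, eq_empty_iff_forall_notMem]
  intro χ hχ
  obtain ⟨L, hL⟩ := exists_cylinder_subset (isOpen_interior.mem_nhds hχ)
  -- the point agreeing with `χ` below `L` and vanishing from `L` on is not in `C N`
  have hcyl : (fun j => decide (j < L) && χ j) ∈ cylinder χ L := fun j hj => by simp [hj]
  have := interior_subset (hL hcyl)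
  simp only [C, mem_iInter, mem_iUnion] at this
  obtain ⟨j, hj, hjt⟩ := this (max N L) (le_max_left _ _)
  have : L ≤ j := (le_max_right N L).trans (hK.le_apply.trans hj.1)
  simp [show ¬ j < L by omega] at hjt

theorem isMeagre_cantorCoded_iff {G : Set (Set ℕ)} (hup : ∀ X ∈ G, ∀ Y, X ⊆ Y → Y ∈ G) :
    IsMeagre (cantorCoded G) ↔ ∃ K, StrictMono K ∧ HitsIntervals G K :=
  ⟨exists_hitsIntervals_of_isMeagre hup, fun ⟨_, hK, hG⟩ =>
    isMeagre_cantorCoded_of_hitsIntervals hK hG⟩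

theorem isMeagre_cantorCoded_of_baireMeasurableSet {G : Set (Set ℕ)}
    (hG : ∀ X ∈ G, ∀ Y ∈ G, (X ∩ Y).Infinite) (hB : BaireMeasurableSet (cantorCoded G)) :
    IsMeagre (cantorCoded G) := by
  by_contra hnm
  obtain ⟨U, hU, hGU⟩ := hB.residualEq_isOpen
  rw [eventuallyEq_set] at hGU
  obtain ⟨ξ, hξ⟩ : U.Nonempty := nonempty_iff_ne_empty.2 fun hU0 => hnm <| by
    filter_upwards [hGU] with χ hχ
    simpa [hU0] using hχ
  obtain ⟨N, hN⟩ := exists_cylinder_subset (hU.mem_nhds hξ)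
  -- flipping every bit from `N` on preserves `cylinder ξ N ⊆ U` and meagre sets
  set t : ℕ → Bool := fun j => decide (N ≤ j)
  have hflip : ∀ᶠ χ in residual _, t + χ ∈ cantorCoded G ↔ t + χ ∈ U :=
    (tendsto_residual_of_isOpenMap (continuous_const_add t) (isOpenMap_add_left t)).eventually hGU
  obtain ⟨χ, -, hχ, htχ⟩ : ∃ χ ∈ cylinder ξ N, χ ∈ cantorCoded G ∧ t + χ ∈ cantorCoded G := by
    by_contra! h
    apply not_isMeagre_of_isOpen (isOpen_cylinder _ ξ N) ⟨ξ, self_mem_cylinder ξ N⟩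
    filter_upwards [hGU, hflip] with χ h1 h2 hχ
    refine h χ hχ (h1.2 (hN hχ)) (h2.2 (hN fun j hj => ?_))
    simp [t, Bool.add_eq_xor, hχ j hj, not_le.2 hj]
  refine hG _ hχ _ htχ ((finite_Iio N).subset fun j ⟨h1, h2⟩ => ?_)
  by_contra hj
  simp_all [t, Bool.add_eq_xor, not_lt.1 (mt mem_Iio.2 hj)]

end CantorSpace

section Games

def onePlay (τ σ : Strat) (k : ℕ) : ℕ :=
  τ (List.ofFn fun i : Fin k => σ (List.ofFn fun j : Fin (i + 1) => onePlay τ σ j))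
termination_by k
decreasing_by omega

theorem oneFollow_twoFollow_onePlay (τ σ : Strat) :
    oneFollow τ (twoFollow σ (onePlay τ σ)) = onePlay τ σ := by
  funext k
  rw [onePlay]
  rfl

theorem not_twoWinning1_of_oneWinning1 {G : Set (Set ℕ)} {τ σ : Strat} (hτ : OneWinning1 G τ) :
    ¬ TwoWinning1 G σ := fun hσ => by
  have := hτ (twoFollow σ (onePlay τ σ))
  rw [oneFollow_twoFollow_onePlay] at this
  exact this (hσ _)

theorem range_inter_Ico_eq_empty {n : ℕ → ℕ} (hn : StrictMono n) {k a b : ℕ} (ha : n k < a)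
    (hb : b ≤ n (k + 1)) : range n ∩ Ico a b = ∅ := by
  refine eq_empty_iff_forall_notMem.2 fun _ ⟨⟨t, ht⟩, hta, htb⟩ => ?_
  subst ht
  rcases le_or_gt t k with htk | htk
  · exact absurd (hn.monotone htk) (by omega)
  · exact absurd (hn.monotone (show k + 1 ≤ t from htk)) (by omega)

theorem exists_oneWinning1_of_hitsIntervals {G : Set (Set ℕ)} {K : ℕ → ℕ} (hK : StrictMono K)
    (hG : HitsIntervals G K) : ∃ τ : Strat, OneWinning1 G τ := by
  refine ⟨fun l => K (l.getLastD 0 + 2), fun n ⟨hn, hbeat, hrange⟩ => ?_⟩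
  obtain ⟨N, hN⟩ := (hG _ hrange).exists_forall_of_atTop
  obtain ⟨_ | k, hk, hlt⟩ := hbeat (N + 1)
  · omega
  have hmove : oneFollow (fun l => K (l.getLastD 0 + 2)) n (k + 1) = K (n k + 2) := by
    simp only [oneFollow, List.ofFn_succ', List.concat_eq_append, List.getLastD_concat,
      Fin.val_last]
  obtain ⟨x, hx⟩ := hN (n k + 1) (by have := hn.le_apply (x := k); omega)
  have hskip := range_inter_Ico_eq_empty hn (Nat.lt_succ_self _ |>.trans_le hK.le_apply)
    (hmove ▸ hlt.le)
  exact hskip.subset hx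

theorem exists_strategy_bound (τ : Strat) (L b : ℕ) :
    ∃ c, ∀ j ≤ L, ∀ p : Fin j → ℕ, (∀ i, p i < b) → τ (List.ofFn p) < c := by
  let value j (q : Fin j → Fin b) := τ (List.ofFn fun i => (q i : ℕ))
  let bound j := Finset.univ.sup (value j)
  refine ⟨(Finset.range (L + 1)).sup bound + 1, fun j hj p hp => Nat.lt_succ_of_le ?_⟩
  calc τ (List.ofFn p) = value j fun i => ⟨p i, hp i⟩ := rfl
    _ ≤ bound j := Finset.le_sup (Finset.mem_univ _)
    _ ≤ _ := Finset.le_sup (Finset.mem_range.2 (Nat.lt_succ_of_le hj))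

theorem exists_hitsIntervals_of_oneWinning1 {G : Set (Set ℕ)} (hinf : ∀ X ∈ G, X.Infinite)
    {τ : Strat} (hτ : OneWinning1 G τ) : ∃ K, StrictMono K ∧ HitsIntervals G K := by
  choose c hc using fun b => exists_strategy_bound τ b b
  set k : ℕ → ℕ := fun i => Nat.rec 0 (fun _ k => max (k + 1) (c k)) i
  have hk : StrictMono k :=
    strictMono_nat_of_lt_succ fun i => lt_max_of_lt_left (Nat.lt_succ_self _)
  have hbound : ∀ i j (p : Fin j → ℕ), j ≤ k i → (∀ t, p t < k i) → τ (List.ofFn p) < k (i + 1) :=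
    fun i j p hj hp => (hc _ j hj p hp).trans_le (le_max_right _ _)
  have hk2 : StrictMono fun i => k (2 * i) := hk.comp (strictMono_mul_left_of_pos two_pos)
  refine ⟨fun i => k (2 * i), hk2, fun X hX => ?_⟩
  by_contra hmiss
  rw [not_eventually] at hmiss
  have hXinf : {x | x ∈ X}.Infinite := hinf X hX
  set n := enum X
  have hn : StrictMono n := Nat.nth_strictMono hXinf
  refine hτ n ⟨hn, fun N => ?_, by simpa [n, enum, Nat.range_nth_of_infinite hXinf] using hX⟩
  -- TWO, enumerating `X`, enters a skipped interval `[k (2 i), k (2 i + 2))` beyond `n N` only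
  -- after ONE has moved below `k (2 i + 1)`
  obtain ⟨i, hi, hiN⟩ :=
    (hmiss.and_eventually (hk2.tendsto_atTop.eventually_gt_atTop (n N))).exists
  obtain ⟨j, hjX, hlow⟩ : ∃ j, k (2 * i) ≤ n j ∧ ∀ t < j, n t < k (2 * i) :=
    have hex : ∃ j, k (2 * i) ≤ n j := ⟨k (2 * i), hn.le_apply⟩
    ⟨Nat.find hex, Nat.find_spec hex, fun t ht => not_le.1 (Nat.find_min hex ht)⟩
  have hNj : N ≤ j := by
    by_contra h
    have := hn (not_le.1 h)
    omega
  have hjk : j ≤ k (2 * i) := by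
    by_contra h
    exact absurd (hlow _ (not_le.1 h)) (not_lt.2 hn.le_apply)
  refine ⟨j, hNj, ?_⟩
  calc oneFollow τ n j < k (2 * i + 1) := hbound _ j _ hjk fun t => hlow t t.2
    _ < k (2 * (i + 1)) := hk (show 2 * i + 1 < 2 * (i + 1) by omega)
    _ ≤ n j := by
      by_contra h
      exact hi ⟨n j, Nat.nth_mem_of_infinite hXinf j, hjX, not_le.1 h⟩

def outcomeSupersets (σ : Strat) : Set (Set ℕ) := {Y | ∃ m, range (twoFollow σ m) ⊆ Y}

theorem continuous_twoFollow (σ : Strat) (k : ℕ) : Continuous fun m : ℕ → ℕ => twoFollow σ m k :=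
  continuous_of_discreteTopology (f := fun p : Fin (k + 1) → ℕ => σ (List.ofFn p)).comp
    (continuous_pi fun i => continuous_apply (i : ℕ))

theorem analyticSet_cantorCoded_outcomeSupersets (σ : Strat) :
    AnalyticSet (cantorCoded (outcomeSupersets σ)) := by
  have : cantorCoded (outcomeSupersets σ) =
      Prod.snd '' {p : (ℕ → ℕ) × (ℕ → Bool) | ∀ k v, twoFollow σ p.1 k = v → p.2 v = true} := by
    ext χ
    simp [cantorCoded, outcomeSupersets, range_subset_iff]
  rw [this]
  -- not found by instance search
  have : PolishSpace (ℕ → Bool) := {}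
  refine (IsClosed.analyticSet ?_).image_of_continuous continuous_snd
  simp only [ofPred_forall]
  exact isClosed_iInter fun k => isClosed_iInter fun v =>
    isClosed_imp ((isOpen_discrete {v}).preimage ((continuous_twoFollow σ k).comp continuous_fst))
      (isClosed_eq ((continuous_apply v).comp continuous_snd) continuous_const)

theorem not_twoWinning1 {F : Set (Set ℕ)} (hF : IsNPFilter F) (σ : Strat) : ¬ TwoWinning1 F σ := by
  intro hσ
  set G := outcomeSupersets σ
  have hup : ∀ X ∈ G, ∀ Y, X ⊆ Y → Y ∈ G := fun X ⟨m, hm⟩ Y hXY => ⟨m, hm.trans hXY⟩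
  have hinter : ∀ X ∈ G, ∀ Y ∈ G, (X ∩ Y).Infinite := fun X ⟨m, hm⟩ Y ⟨m', hm'⟩ =>
    (hF.2.2 _ (hF.2.1 _ (hσ m).2.2 _ (hσ m').2.2)).mono (inter_subset_inter hm hm')
  have hσG : TwoWinning1 G σ := fun m => ⟨(hσ m).1, (hσ m).2.1, m, subset_rfl⟩
  obtain ⟨K, hK, hGK⟩ := (isMeagre_cantorCoded_iff hup).1 <|
    isMeagre_cantorCoded_of_baireMeasurableSet hinter
      (analyticSet_cantorCoded_outcomeSupersets σ).baireMeasurableSet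
  obtain ⟨τ, hτ⟩ := exists_oneWinning1_of_hitsIntervals hK hGK
  exact not_twoWinning1_of_oneWinning1 hτ hσG

end Games

/-- `F` meager ↔ ONE has a winning strategy in `G1(F)` ↔ `G1(F)` is determined. -/
theorem stmt3 (F : Set (Set ℕ)) (hF : IsNPFilter F) :
    List.TFAE [IsMeagre (cantorCoded F),
               ∃ σ : Strat, OneWinning1 F σ,
               (∃ σ : Strat, OneWinning1 F σ) ∨ (∃ σ : Strat, TwoWinning1 F σ)] := by
  tfae_have 1 → 2 := fun h => by
    obtain ⟨K, hK, hFK⟩ := (isMeagre_cantorCoded_iff hF.1).1 h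
    exact exists_oneWinning1_of_hitsIntervals hK hFK
  tfae_have 2 → 3 := Or.inl
  tfae_have 3 → 1 := by
    rintro (⟨τ, hτ⟩ | ⟨σ, hσ⟩)
    · obtain ⟨K, hK, hFK⟩ := exists_hitsIntervals_of_oneWinning1 hF.2.2 hτ
      exact isMeagre_cantorCoded_of_hitsIntervals hK hFK
    · exact absurd hσ (not_twoWinning1 hF σ)
  tfae_finish
end

section
/- For a non-principal filter F on ℕ, player TWO does not have a winning strategy in the game G2(F). -/
open Filter Set

/-!
Against a strategy `σ` for TWO, fix a strictly increasing scale `t` so fast that whenever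
ONE's moves so far are at most `t j` and there are at most `j + 1` of them, TWO's answer is
below `t (j + 1)`. If ONE plays `t (2k)` in inning `k`, TWO must eventually answer inside
`(t (2k), t (2k+1))`; if ONE plays `t (2k+1)`, inside `(t (2k+1), t (2k+2))`. These windows are
pairwise disjoint, so the two sets of answers meet in a finite set, which cannot lie in `F`.
-/

lemma Strat.exists_gt (σ : Strat) (L b : ℕ) :
    ∃ c, ∀ l : List ℕ, l.length ≤ L → (∀ x ∈ l, x ≤ b) → σ l < c := by
  have hfin : {l : List ℕ | l.length ≤ L ∧ ∀ x ∈ l, x ≤ b}.Finite := by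
    refine ((List.finite_length_le (Iic b) L).image (List.map Subtype.val)).subset ?_
    rintro l ⟨hL, hb⟩
    lift l to List (Iic b) using hb
    exact ⟨l, by simpa using hL, rfl⟩
  obtain ⟨c, hc⟩ := (hfin.image σ).bddAbove
  exact ⟨c + 1, fun l hL hb => Nat.lt_succ_of_le (hc ⟨l, ⟨hL, hb⟩, rfl⟩)⟩

def Outruns (t : ℕ → ℕ) (σ : Strat) : Prop :=
  ∀ j (l : List ℕ), l.length ≤ j + 1 → (∀ x ∈ l, x ≤ t j) → σ l < t (j + 1)

lemma Strat.exists_strictMono_outruns (σ : Strat) : ∃ t, StrictMono t ∧ Outruns t σ := by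
  choose c hc using σ.exists_gt
  let t : ℕ → ℕ := fun j => Nat.rec 0 (fun j tj => max (tj + 1) (c (j + 1) tj)) j
  refine ⟨t, strictMono_nat_of_lt_succ fun j => ?_, fun j l hL hb => ?_⟩
  · exact (Nat.lt_succ_self _).trans_le (le_max_left _ _)
  · exact (hc _ _ l hL hb).trans_le (le_max_right _ _)

lemma Outruns.twoFollow_comp_lt {t s : ℕ → ℕ} {σ : Strat} (hσ : Outruns t σ)
    (ht : Monotone t) (hs : StrictMono s) (k : ℕ) :
    twoFollow σ (t ∘ s) k < t (s k + 1) := by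
  refine hσ (s k) _ (by simpa using hs.le_apply) ?_
  simp only [List.mem_ofFn, Function.comp_apply]
  rintro _ ⟨i, rfl⟩
  exact ht (hs.monotone (Nat.lt_succ_iff.mp i.isLt))

lemma StrictMono.eq_of_mem_Ioo {t : ℕ → ℕ} (ht : StrictMono t) {i j x : ℕ}
    (hi : x ∈ Ioo (t i) (t (i + 1))) (hj : x ∈ Ioo (t j) (t (j + 1))) : i = j := by
  have := ht.lt_iff_lt.mp (hi.1.trans hj.2)
  have := ht.lt_iff_lt.mp (hj.1.trans hi.2)
  omega

lemma finite_range_inter_of_eventually_mem_Ioo {t s s' n n' : ℕ → ℕ} (ht : StrictMono t)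
    (hss' : ∀ k k', s k ≠ s' k')
    (hn : ∀ᶠ k in atTop, n k ∈ Ioo (t (s k)) (t (s k + 1)))
    (hn' : ∀ᶠ k in atTop, n' k ∈ Ioo (t (s' k)) (t (s' k + 1))) :
    (range n ∩ range n').Finite := by
  obtain ⟨K, hK⟩ := eventually_atTop.mp hn
  obtain ⟨K', hK'⟩ := eventually_atTop.mp hn'
  refine (((finite_Iio K).image n).union ((finite_Iio K').image n')).subset ?_
  rintro _ ⟨⟨k, rfl⟩, ⟨k', hk'⟩⟩
  by_cases hk : k < K
  · exact Or.inl ⟨k, hk, rfl⟩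
  refine Or.inr ⟨k', ?_, hk'⟩
  by_contra hk''
  exact hss' k k' (ht.eq_of_mem_Ioo (hK k (not_lt.mp hk)) (hk' ▸ hK' k' (not_lt.mp hk'')))

/-- TWO does not have a winning strategy in `G2(F)`. -/
theorem stmt4 (F : Set (Set ℕ)) (hF : IsNPFilter F) :
    ¬ ∃ σ : Strat, TwoWinning2 F σ := by
  rintro ⟨σ, hσ⟩
  obtain ⟨t, ht, hout⟩ := σ.exists_strictMono_outruns
  have trapped : ∀ s : ℕ → ℕ, StrictMono s →
      ∀ᶠ k in atTop, twoFollow σ (t ∘ s) k ∈ Ioo (t (s k)) (t (s k + 1)) := fun s hs =>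
    (hσ (t ∘ s)).1.mono fun k hk => ⟨hk, hout.twoFollow_comp_lt ht.monotone hs k⟩
  have hfin := finite_range_inter_of_eventually_mem_Ioo ht (s := (2 * ·)) (s' := (2 * · + 1))
    (by omega) (trapped _ (strictMono_mul_left_of_pos two_pos))
    (trapped _ ((strictMono_mul_left_of_pos two_pos).add_const 1))
  exact hF.2.2 _ (hF.2.1 _ (hσ _).2 _ (hσ _).2) hfin
end

section
/- If F is a rare non-principal filter on ℕ, then player ONE does not have a winning strategy in the game G2(F); consequently, since TWO never has a winning strategy, G2(F) is undetermined. -/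
open Filter Set

/-! Every strategy `σ` is dominated along increasing plays: there is `B` with
`σ [x₀, …, x_k] ≤ B x_k` whenever `x₀ < ⋯ < x_k`, because only finitely many such lists end
below a given bound.

ONE cannot win: choose blocks `[b j, b (j+1))` with `B < b (j+1)` on `[0, b j]`. Rarity, applied
to the two partitions into pairs of consecutive blocks (shifted by one block against each other),
gives `X ∈ F` whose consecutive elements lie at least two blocks apart, so every element of `X`
exceeds `B` of its predecessor; TWO, playing `X` in increasing order, beats `σ`.

TWO cannot win: ONE runs two plays `s 0, s 2, s 4, …` and `s 1, s 3, s 5, …` with `s` growing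
faster than `B`. TWO's answers are eventually trapped in the alternating gaps
`(s (2k), s (2k+1))` and `(s (2k+1), s (2k+2))`, so the two answer sets, both in `F`, meet in
a finite set. -/

lemma finite_setOf_length_le_forall_lt (L a : ℕ) :
    {l : List ℕ | l.length ≤ L ∧ ∀ x ∈ l, x < a}.Finite := by
  refine ((List.finite_length_le (Fin a) L).image (List.map Fin.val)).subset ?_
  rintro l ⟨hlen, hlt⟩
  lift l to List (Fin a) using hlt
  exact ⟨l, by simpa using hlen, rfl⟩

lemma exists_bound_ofFn_strictMono (σ : List ℕ → ℕ) :
    ∃ B : ℕ → ℕ, ∀ n : ℕ → ℕ, StrictMono n → ∀ k,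
      σ (List.ofFn fun i : Fin (k + 1) => n i) ≤ B (n k) := by
  choose B hB using fun a =>
    ((finite_setOf_length_le_forall_lt (a + 1) (a + 1)).image σ).bddAbove
  refine ⟨B, fun n hn k => hB (n k) ⟨_, ⟨?_, ?_⟩, rfl⟩⟩
  · simpa using hn.id_le k
  · simp only [List.mem_ofFn, forall_exists_index]
    rintro _ i rfl
    exact Nat.lt_succ_of_le (hn.monotone (Nat.lt_succ_iff.mp i.isLt))

lemma exists_strictMono_dominating (f : ℕ → ℕ) :
    ∃ b : ℕ → ℕ, StrictMono b ∧ b 0 = 0 ∧ ∀ j x, x ≤ b j → f x < b (j + 1) := by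
  obtain ⟨g, hg_self, hg_dom⟩ : ∃ g : ℕ → ℕ, (∀ y, y < g y) ∧ ∀ y x, x ≤ y → f x < g y := by
    refine ⟨fun y => y + 1 + ∑ i ∈ Finset.range (y + 1), f i, fun y => by dsimp only; omega,
      fun y x hx => ?_⟩
    have : f x ≤ ∑ i ∈ Finset.range (y + 1), f i :=
      Finset.single_le_sum (fun _ _ => Nat.zero_le _) (Finset.mem_range.mpr (by omega))
    dsimp only
    omega
  refine ⟨fun j => g^[j] 0, strictMono_nat_of_lt_succ fun j => ?_, rfl, fun j x hx => ?_⟩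
  · simpa only [Function.iterate_succ_apply'] using hg_self _
  · simpa only [Function.iterate_succ_apply'] using hg_dom _ x hx

lemma iUnion_Ico_eq_univ_of_strictMono {b : ℕ → ℕ} (hb : StrictMono b) (h0 : b 0 = 0) :
    ⋃ j, Ico (b j) (b (j + 1)) = univ := by
  simpa [h0] using iUnion_Ico_map_succ_eq_Ici (fun j => hb.monotone (Nat.zero_le j))
    hb.not_bddAbove_range_of_wellFoundedLT

lemma IsRare.exists_subsingleton_inter_Ico {F : Set (Set ℕ)} (h : IsRare F) {b : ℕ → ℕ}
    (hb : StrictMono b) : ∃ X ∈ F, ∀ j, (X ∩ Ico (b j) (b (j + 1))).Subsingleton := by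
  -- lowering the first endpoint to `0` makes the blocks cover `ℕ`
  set c := Function.update b 0 0
  have hcb : ∀ j, c j ≤ b j := by rintro (_ | j) <;> simp [c]
  have hc : StrictMono c := strictMono_nat_of_lt_succ fun j => by
    cases j <;> simp [c, hb (Nat.lt_succ_self _), (Nat.zero_le (b 0)).trans_lt (hb zero_lt_one)]
  obtain ⟨X, hXF, hX⟩ := h (fun j => Ico (c j) (c (j + 1))) (fun _ => finite_Ico _ _)
    (fun j => nonempty_Ico.2 (hc j.lt_succ_self))
    hc.monotone.pairwise_disjoint_on_Ico_succ
    (iUnion_Ico_eq_univ_of_strictMono hc (by simp [c]))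
  exact ⟨X, hXF, fun j => (hX j).anti (inter_subset_inter_right X (Ico_subset_Ico_left (hcb j)))⟩

theorem IsRare.exists_sparse {F : Set (Set ℕ)} (hF : IsNPFilter F) (h : IsRare F)
    (f : ℕ → ℕ) : ∃ X ∈ F, ∀ x ∈ X, ∀ y ∈ X, x < y → f x < y := by
  obtain ⟨b, hb, hb0, hbf⟩ := exists_strictMono_dominating f
  obtain ⟨X₀, hX₀F, hX₀⟩ :=
    h.exists_subsingleton_inter_Ico (b := fun j => b (2 * j)) (hb.comp fun _ _ _ => by omega)
  obtain ⟨X₁, hX₁F, hX₁⟩ :=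
    h.exists_subsingleton_inter_Ico (b := fun j => b (2 * j + 1)) (hb.comp fun _ _ _ => by omega)
  have hpair : ∀ j, (X₀ ∩ X₁ ∩ Ico (b j) (b (j + 2))).Subsingleton := by
    intro j
    obtain ⟨q, rfl | rfl⟩ := Nat.even_or_odd' j
    · refine (hX₀ q).anti (inter_subset_inter inter_subset_left ?_)
      rw [show 2 * q + 2 = 2 * (q + 1) by ring]
    · refine (hX₁ q).anti (inter_subset_inter inter_subset_right ?_)
      rw [show 2 * q + 1 + 2 = 2 * (q + 1) + 1 by ring]
  refine ⟨X₀ ∩ X₁, hF.2.1 _ hX₀F _ hX₁F, fun x hx y hy hxy => ?_⟩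
  obtain ⟨j, hjx⟩ := mem_iUnion.1 ((iUnion_Ico_eq_univ_of_strictMono hb hb0).symm ▸ mem_univ x)
  have hyj : b (j + 2) ≤ y := by
    by_contra! hlt
    exact hxy.ne (hpair j ⟨hx, hjx.1, hjx.2.trans (hb (Nat.lt_succ_self _))⟩
      ⟨hy, hjx.1.trans hxy.le, hlt⟩)
  exact (hbf (j + 1) x hjx.2.le).trans_le hyj

theorem not_exists_oneWinning2 {F : Set (Set ℕ)} (hF : IsNPFilter F) (h : IsRare F) :
    ¬ ∃ σ : Strat, OneWinning2 F σ := by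
  rintro ⟨σ, hσ⟩
  obtain ⟨B, hB⟩ := exists_bound_ofFn_strictMono σ
  obtain ⟨X, hXF, hX⟩ := h.exists_sparse hF B
  have hXinf : X.Infinite := hF.2.2 X hXF
  have hn : StrictMono (enum X) := Nat.nth_strictMono hXinf
  have hmem : ∀ k, enum X k ∈ X := Nat.nth_mem_of_infinite hXinf
  refine hσ (enum X) ⟨eventually_atTop.2 ⟨1, fun k hk => ?_⟩, ?_⟩
  · obtain ⟨k, rfl⟩ := Nat.exists_eq_add_of_le' hk
    exact (hB _ hn k).trans_lt (hX _ (hmem k) _ (hmem (k + 1)) (hn k.lt_succ_self))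
  · exact (Nat.range_nth_of_infinite hXinf : range (enum X) = X) ▸ hXF

lemma finite_range_inter_range_of_interleaved {s n n' : ℕ → ℕ} (hs : StrictMono s)
    (hn : ∀ᶠ k in atTop, s (2 * k) < n k ∧ n k < s (2 * k + 1))
    (hn' : ∀ᶠ k in atTop, s (2 * k + 1) < n' k ∧ n' k < s (2 * k + 1 + 1)) :
    (range n ∩ range n').Finite := by
  obtain ⟨K, hK⟩ := eventually_atTop.1 hn
  obtain ⟨K', hK'⟩ := eventually_atTop.1 hn'
  refine (((finite_Iio K).image n).union ((finite_Iio K').image n')).subset ?_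
  rintro _ ⟨⟨k, rfl⟩, ⟨j, hj⟩⟩
  by_cases hk : k < K
  · exact Or.inl ⟨k, hk, rfl⟩
  by_cases hj' : j < K'
  · exact Or.inr ⟨j, hj', hj⟩
  obtain ⟨h₁, h₂⟩ := hK k (not_lt.1 hk)
  obtain ⟨h₃, h₄⟩ := hK' j (not_lt.1 hj')
  rw [hj] at h₃ h₄
  have := hs.lt_iff_lt.1 (h₁.trans h₄)
  have := hs.lt_iff_lt.1 (h₃.trans h₂)
  omega

theorem not_exists_twoWinning2 {F : Set (Set ℕ)} (hF : IsNPFilter F) :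
    ¬ ∃ σ : Strat, TwoWinning2 F σ := by
  rintro ⟨σ, hσ⟩
  obtain ⟨B, hB⟩ := exists_bound_ofFn_strictMono σ
  obtain ⟨s, hs, -, hsB⟩ := exists_strictMono_dominating B
  have hplay : ∀ r, (∀ᶠ k in atTop, s (2 * k + r) < twoFollow σ (fun k => s (2 * k + r)) k ∧
      twoFollow σ (fun k => s (2 * k + r)) k < s (2 * k + r + 1)) ∧
      range (twoFollow σ fun k => s (2 * k + r)) ∈ F := by
    intro r
    have hm : StrictMono fun k => s (2 * k + r) := hs.comp fun _ _ _ => by omega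
    obtain ⟨hdom, hrange⟩ := hσ fun k => s (2 * k + r)
    exact ⟨hdom.mono fun k hk => ⟨hk, (hB _ hm k).trans_lt (hsB _ _ le_rfl)⟩, hrange⟩
  obtain ⟨h₀, hF₀⟩ := hplay 0
  obtain ⟨h₁, hF₁⟩ := hplay 1
  exact hF.2.2 _ (hF.2.1 _ hF₀ _ hF₁) (finite_range_inter_range_of_interleaved hs h₀ h₁)

/-- If `F` is rare then ONE has no winning strategy in `G2(F)`; since TWO never has one,
`G2(F)` is undetermined. -/
theorem stmt6 (F : Set (Set ℕ)) (hF : IsNPFilter F) (h : IsRare F) :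
    (¬ ∃ σ : Strat, OneWinning2 F σ) ∧ (¬ ∃ σ : Strat, TwoWinning2 F σ) :=
  ⟨not_exists_oneWinning2 hF h, not_exists_twoWinning2 hF⟩
end

section
/- Suppose F is a strategy (for player TWO in game G1) mapping finite sequences of natural numbers to natural numbers, which is a winning strategy for TWO. Then for every finite sequence σ of natural numbers there exist a finite sequence τ and a natural number n such that F(σ ⌢ τ ⌢ ⟨y⟩) > y for every y > n. -/
open Filter Set

/-! If the claim failed for some opening `s`, then after any continuation `t` ONE could find a
move `y` that TWO's strategy does not beat: `σ (s ++ t ++ [y]) ≤ y`. ONE opens with `s` and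
from then on always plays such a `y`, so TWO answers every later move with `n k ≤ m k`,
whereas a winning strategy must have `m k < n k` infinitely often. -/

def playAfter (s : List ℕ) (R : List ℕ → ℕ) (k : ℕ) : ℕ :=
  if k < s.length then s.getD k 0 else R (List.ofFn fun i : Fin k => playAfter s R i)

theorem playAfter_of_length_le {s : List ℕ} {R : List ℕ → ℕ} {k : ℕ} (hk : s.length ≤ k) :
    playAfter s R k = R (List.ofFn fun i : Fin k => playAfter s R i) := by
  rw [playAfter, if_neg hk.not_gt]

theorem take_ofFn_playAfter {s : List ℕ} {R : List ℕ → ℕ} {k : ℕ} (hk : s.length ≤ k) :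
    (List.ofFn fun i : Fin k => playAfter s R i).take s.length = s := by
  apply List.ext_getElem (by simp [hk])
  intro i _ hi
  simp only [List.getElem_take, List.getElem_ofFn]
  rw [playAfter, if_pos hi, List.getD_eq_getElem]

theorem twoFollow_eq_append (σ : Strat) (m : ℕ → ℕ) (k : ℕ) :
    twoFollow σ m k = σ ((List.ofFn fun i : Fin k => m i) ++ [m k]) := by
  rw [twoFollow, List.ofFn_succ', List.concat_eq_append]
  rfl

theorem stmt8_general (F : Set (Set ℕ)) (σ : Strat) (hσ : TwoWinning1 F σ) :
    ∀ s : List ℕ, ∃ t : List ℕ, ∃ n : ℕ, ∀ y : ℕ, n < y → y < σ (s ++ t ++ [y]) := by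
  intro s
  by_contra! hbad
  choose Y hY using fun t => (hbad t 0).imp fun _ => And.right
  set m := playAfter s fun h => Y (h.drop s.length)
  obtain ⟨k, hk, hlt⟩ := (hσ m).2.1 s.length
  set t := (List.ofFn fun i : Fin k => m i).drop s.length
  have hmk : m k = Y t := playAfter_of_length_le hk
  have hhist : (List.ofFn fun i : Fin k => m i) = s ++ t := by
    rw [← List.take_append_drop s.length (List.ofFn _), take_ofFn_playAfter hk]
  rw [twoFollow_eq_append, hhist, hmk] at hlt
  exact (hY t).not_gt hlt

/-- The Claim: if `σ` is a winning strategy for TWO in `G1(F)`, then for each finite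
sequence `s` there are a finite sequence `t` and an `n` such that
`σ (s ++ t ++ [y]) > y` for every `y > n`. -/
theorem stmt8 (F : Set (Set ℕ)) (hF : IsNPFilter F) (σ : Strat) (hσ : TwoWinning1 F σ) :
    ∀ s : List ℕ, ∃ t : List ℕ, ∃ n : ℕ, ∀ y : ℕ, n < y → y < σ (s ++ t ++ [y]) :=
  stmt8_general F σ hσ
end

section
/- Every rare filter on ℕ is non-meager (does not have the property of Baire as a subset of Cantor space). Equivalently, no meager filter is rare. -/
open Filter Set

lemma cyl_open (M : ℕ) (τ : ℕ → Bool) : IsOpen {χ : ℕ → Bool | ∀ i < M, χ i = τ i} := by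
  have : {χ : ℕ → Bool | ∀ i < M, χ i = τ i} = ⋂ i ∈ Finset.range M, {χ : ℕ → Bool | χ i = τ i} := by
    ext χ; simp [Finset.mem_range]
  rw [this]
  refine isOpen_biInter_finset fun i _ => ?_
  have : {χ : ℕ → Bool | χ i = τ i} = (fun χ : ℕ → Bool => χ i) ⁻¹' {τ i} := rfl
  rw [this]
  exact (continuous_apply i).isOpen_preimage _ (isOpen_discrete _)

lemma cyl_basis {χ : ℕ → Bool} {U : Set (ℕ → Bool)} (hU : IsOpen U) (hχ : χ ∈ U) :
    ∃ M, ∀ χ' : ℕ → Bool, (∀ i < M, χ' i = χ i) → χ' ∈ U := by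
  rw [isOpen_pi_iff] at hU
  obtain ⟨I, u, hu, hsub⟩ := hU χ hχ
  classical
  refine ⟨(I.sup id) + 1, fun χ' hχ' => hsub ?_⟩
  intro i hi
  have : χ' i = χ i := hχ' i (Nat.lt_succ_of_le (Finset.le_sup (f := id) hi))
  rw [this]; exact (hu i hi).2

lemma nwd_ext {K : Set (ℕ → Bool)} (hKc : IsClosed K) (hK : IsNowhereDense K)
    (N : ℕ) (σ : ℕ → Bool) :
    ∃ M, ∃ τ : ℕ → Bool, N < M ∧ (∀ i < N, τ i = σ i) ∧ ∀ χ : ℕ → Bool, (∀ i < M, χ i = τ i) → χ ∉ K := by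
  have hdense : Dense Kᶜ := (isClosed_isNowhereDense_iff_compl.mp ⟨hKc, hK⟩).2
  have hne : ({χ : ℕ → Bool | ∀ i < N, χ i = σ i} ∩ Kᶜ).Nonempty := by
    have hcyl : ({χ : ℕ → Bool | ∀ i < N, χ i = σ i} : Set _).Nonempty := ⟨σ, fun i _ => rfl⟩
    exact hdense.inter_open_nonempty _ (cyl_open N σ) hcyl
  obtain ⟨χ, hχcyl, hχc⟩ := hne
  have hopen : IsOpen ({χ : ℕ → Bool | ∀ i < N, χ i = σ i} ∩ Kᶜ) :=
    (cyl_open N σ).inter hKc.isOpen_compl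
  obtain ⟨M', hM'⟩ := cyl_basis hopen ⟨hχcyl, hχc⟩
  refine ⟨max M' (N + 1), χ, by omega, fun i hi => hχcyl i hi, fun χ' hχ' => ?_⟩
  have : χ' ∈ {χ : ℕ → Bool | ∀ i < N, χ i = σ i} ∩ Kᶜ :=
    hM' χ' fun i hi => hχ' i (lt_of_lt_of_le hi (le_max_left _ _))
  exact this.2

lemma nwd_uniform {K : Set (ℕ → Bool)} (hKc : IsClosed K) (hK : IsNowhereDense K) (N : ℕ) :
    ∃ M, N < M ∧ ∀ σ : ℕ → Bool, ∃ τ : ℕ → Bool, (∀ i < N, τ i = σ i) ∧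
      ∀ χ : ℕ → Bool, (∀ i < M, χ i = τ i) → χ ∉ K := by
  classical
  have H : ∀ v : Fin N → Bool, ∃ M, ∃ τ : ℕ → Bool, N < M ∧
      (∀ i < N, τ i = (fun i => if h : i < N then v ⟨i, h⟩ else false) i) ∧
      ∀ χ : ℕ → Bool, (∀ i < M, χ i = τ i) → χ ∉ K :=
    fun v => nwd_ext hKc hK N _
  choose Mv τv hMv hagr havoid using H
  refine ⟨(Finset.univ.sup Mv) + N + 1, by omega, fun σ => ?_⟩
  set v : Fin N → Bool := fun i => σ i with hv
  refine ⟨τv v, ?_, ?_⟩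
  · intro i hi
    have := hagr v i hi
    simpa [hi, hv] using this
  · intro χ hχ
    refine havoid v χ fun i hi => hχ i ?_
    have : Mv v ≤ Finset.univ.sup Mv := Finset.le_sup (Finset.mem_univ v)
    omega

lemma union_int_empty {Y : Type*} [TopologicalSpace Y] {s t : Set Y}
    (hs : IsClosed s) (hsi : interior s = ∅) (hti : interior t = ∅) :
    interior (s ∪ t) = ∅ := by
  have hU : IsOpen (interior (s ∪ t)) := isOpen_interior
  have h1 : interior (s ∪ t) \ s ⊆ interior t := by
    apply interior_maximal
    · intro x hx
      rcases interior_subset hx.1 with h | h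
      · exact absurd h hx.2
      · exact h
    · exact hU.sdiff hs
  rw [hti, Set.subset_empty_iff, Set.diff_eq_empty] at h1
  have h2 : interior (s ∪ t) ⊆ interior s := interior_maximal h1 hU
  rw [hsi, Set.subset_empty_iff] at h2
  exact h2

noncomputable def seqRec (Φ : ℕ → ℕ → ℕ) : ℕ → ℕ :=
  fun k => Nat.rec (motive := fun _ => ℕ) 0 (fun k ih => Φ k ih) k

open Classical in
noncomputable def approx (nn : ℕ → ℕ) (ψ : ℕ → ℕ → (ℕ → Bool) → ℕ → Bool)
    (X : Set ℕ) (χX : ℕ → Bool) : ℕ → ℕ → Bool :=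
  fun k => Nat.rec (motive := fun _ => ℕ → Bool) χX
    (fun k gk i =>
      if i < nn k then gk i
      else if i < nn (k + 1) ∧ X ∩ Set.Ico (nn k) (nn (k + 1)) = ∅ then ψ k (nn k) gk i
      else χX i) k

/-- Every rare filter is non-meager. -/
theorem stmt10 (F : Set (Set ℕ)) (hF : IsNPFilter F) (h : IsRare F) :
    ¬ IsMeagre (cantorCoded F) := by
  classical
  intro hM
  -- F contains univ
  obtain ⟨X₀, hX₀, -⟩ := h (fun n => {n}) (fun n => Set.finite_singleton n) (fun n => ⟨n, rfl⟩)
    (fun i j hij => by simpa using hij) (by ext x; simp)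
  have hUniv : (Set.univ : Set ℕ) ∈ F := hF.1 X₀ hX₀ _ (Set.subset_univ _)
  rw [isMeagre_iff_countable_union_isNowhereDense] at hM
  obtain ⟨S, hSnwd, hSc, hScov⟩ := hM
  have hmemT : (fun _ => true : ℕ → Bool) ∈ cantorCoded F := by
    simpa [cantorCoded] using hUniv
  rcases S.eq_empty_or_nonempty with rfl | hSne
  · simpa using hScov hmemT
  obtain ⟨f, rfl⟩ := hSc.exists_eq_range hSne
  -- increasing sequence of closed nowhere dense sets covering the filter
  set K : ℕ → Set (ℕ → Bool) :=
    fun n => Nat.rec (motive := fun _ => Set (ℕ → Bool)) (closure (f 0))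
      (fun n Kn => Kn ∪ closure (f (n + 1))) n with hKdef
  have hK0 : K 0 = closure (f 0) := rfl
  have hKs : ∀ n, K (n + 1) = K n ∪ closure (f (n + 1)) := fun n => rfl
  have hKcl : ∀ n, IsClosed (K n) := by
    intro n; induction n with
    | zero => exact isClosed_closure
    | succ n ih => rw [hKs]; exact ih.union isClosed_closure
  have hfnwd : ∀ m, interior (closure (f m)) = ∅ := fun m => hSnwd (f m) ⟨m, rfl⟩
  have hKnwd : ∀ n, interior (K n) = ∅ := by
    intro n; induction n with
    | zero => rw [hK0]; exact hfnwd 0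
    | succ n ih => rw [hKs]; exact union_int_empty (hKcl n) ih (hfnwd (n + 1))
  have hKmono : ∀ n m, n ≤ m → K n ⊆ K m := by
    intro n m hnm
    induction hnm with
    | refl => exact subset_rfl
    | step h ih => rename_i m' hm'; exact ih.trans (by rw [hKs]; exact Set.subset_union_left)
  have hfK : ∀ m, closure (f m) ⊆ K m := by
    intro m; cases m with
    | zero => rw [hK0]
    | succ m => rw [hKs]; exact Set.subset_union_right
  -- the Talagrand construction
  have P : ∀ k N, ∃ M, N < M ∧ ∀ σ : ℕ → Bool, ∃ τ : ℕ → Bool, (∀ i < N, τ i = σ i) ∧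
      ∀ χ : ℕ → Bool, (∀ i < M, χ i = τ i) → χ ∉ K k :=
    fun k N => nwd_uniform (hKcl k) ((hKcl k).isNowhereDense_iff.mpr (hKnwd k)) N
  choose Φ hΦ hP using P
  choose ψ hψa hψv using hP
  set nn : ℕ → ℕ := seqRec Φ with hnndef
  have hnn : ∀ k, nn (k + 1) = Φ k (nn k) := fun _ => rfl
  have hlt : ∀ k, nn k < nn (k + 1) := by intro k; rw [hnn]; exact hΦ k (nn k)
  have hmono : StrictMono nn := strictMono_nat_of_lt_succ hlt
  have hge : ∀ k, k ≤ nn k := by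
    intro k; induction k with
    | zero => exact Nat.zero_le _
    | succ k ih => have := hlt k; omega
  -- apply rareness to the paired intervals
  obtain ⟨X, hXF, hXsel⟩ := h (fun m => Set.Ico (nn (2 * m)) (nn (2 * m + 2)))
    (fun m => Set.finite_Ico _ _)
    (fun m => ⟨nn (2 * m), Set.mem_Ico.mpr ⟨le_refl _, hmono (by omega)⟩⟩)
    (by
      intro i j hij
      rw [Set.disjoint_left]
      intro x hx hx2
      rw [Set.mem_Ico] at hx hx2
      rcases hij.lt_or_gt with hlt' | hlt'
      · have : nn (2 * i + 2) ≤ nn (2 * j) := hmono.monotone (by omega)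
        omega
      · have : nn (2 * j + 2) ≤ nn (2 * i) := hmono.monotone (by omega)
        omega)
    (by
      ext x
      simp only [Set.mem_iUnion, Set.mem_univ, iff_true]
      have key : ∀ k, ∀ x, x < nn k → ∃ m, x ∈ Set.Ico (nn (2 * m)) (nn (2 * m + 2)) := by
        intro k
        induction k with
        | zero =>
          intro x hx
          have : nn 0 = 0 := rfl
          omega
        | succ k ih =>
          intro x hx
          by_cases hxk : x < nn k
          · exact ih x hxk
          · refine ⟨k / 2, Set.mem_Ico.mpr ⟨?_, ?_⟩⟩
            · exact le_trans (hmono.monotone (by omega : 2 * (k / 2) ≤ k)) (not_lt.mp hxk)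
            · exact lt_of_lt_of_le hx (hmono.monotone (by omega : k + 1 ≤ 2 * (k / 2) + 2))
      have hxlt : x < nn (x + 1) := lt_of_lt_of_le (Nat.lt_succ_self x) (hge (x + 1))
      exact key (x + 1) x hxlt)
  -- X misses an interval beyond any point
  have hmiss : ∀ m, ∃ k, 2 * m ≤ k ∧ X ∩ Set.Ico (nn k) (nn (k + 1)) = ∅ := by
    intro m
    by_contra hcon
    push_neg at hcon
    have h1 := hcon (2 * m) (le_refl _)
    have h2 := hcon (2 * m + 1) (by omega)
    obtain ⟨a, ha⟩ := h1
    obtain ⟨b, hb⟩ := h2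
    have haJ : a ∈ X ∩ Set.Ico (nn (2 * m)) (nn (2 * m + 2)) := by
      refine ⟨ha.1, ha.2.1, lt_of_lt_of_le ha.2.2 (hmono.monotone (by omega))⟩
    have hbJ : b ∈ X ∩ Set.Ico (nn (2 * m)) (nn (2 * m + 2)) := by
      refine ⟨hb.1, le_trans (hmono.monotone (by omega)) hb.2.1, hb.2.2⟩
    have hab : a = b := hXsel m haJ hbJ
    have h3 : a < nn (2 * m + 1) := ha.2.2
    have h4 : nn (2 * m + 1) ≤ b := hb.2.1
    omega
  -- build the patched characteristic function
  set χX : ℕ → Bool := fun i => if i ∈ X then true else false with hχXdef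
  set g : ℕ → ℕ → Bool := approx nn ψ X χX with hgdef
  have hgs : ∀ k, g (k + 1) = fun i =>
      if i < nn k then g k i
      else if i < nn (k + 1) ∧ X ∩ Set.Ico (nn k) (nn (k + 1)) = ∅ then ψ k (nn k) (g k) i
      else χX i := fun k => rfl
  have hInv2 : ∀ k i, χX i = true → g k i = true := by
    intro k
    induction k with
    | zero => intro i hi; exact hi
    | succ k ih =>
      intro i hi
      rw [hgs k]
      simp only
      by_cases h1 : i < nn k
      · simp only [h1, if_true]; exact ih i hi
      · by_cases h2 : i < nn (k + 1) ∧ X ∩ Set.Ico (nn k) (nn (k + 1)) = ∅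
        · exfalso
          have hiX : i ∈ X := by
            by_contra hX
            simp [hχXdef, hX] at hi
          have : i ∈ X ∩ Set.Ico (nn k) (nn (k + 1)) := ⟨hiX, not_lt.mp h1, h2.1⟩
          rw [h2.2] at this
          exact this
        · simp only [h1, if_false, h2, if_false]; exact hi
  have hInv3 : ∀ k i, i < nn k → g (k + 1) i = g k i := by
    intro k i hi; rw [hgs k]; simp [hi]
  have hInv3d : ∀ d k, ∀ i, i < nn k → g (k + d) i = g k i := by
    intro d
    induction d with
    | zero => intro k i _; rfl
    | succ d ih =>
      intro k i hi
      have h1 : i < nn (k + d) := lt_of_lt_of_le hi (hmono.monotone (Nat.le_add_right k d))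
      calc g (k + d + 1) i = g (k + d) i := hInv3 (k + d) i h1
      _ = g k i := ih k i hi
  have hInv3' : ∀ k m, k ≤ m → ∀ i, i < nn k → g m i = g k i := by
    intro k m hkm i hi
    obtain ⟨d, rfl⟩ := Nat.exists_eq_add_of_le hkm
    exact hInv3d d k i hi
  have hInv4 : ∀ k, X ∩ Set.Ico (nn k) (nn (k + 1)) = ∅ →
      ∀ i, i < nn (k + 1) → g (k + 1) i = ψ k (nn k) (g k) i := by
    intro k hk i hi
    rw [hgs k]
    simp only
    by_cases h1 : i < nn k
    · simp only [h1, if_true]; exact (hψa k (nn k) (g k) i h1).symm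
    · simp only [h1, if_false, hi, hk, and_self, if_true]
  set χ : ℕ → Bool := fun i => g (i + 1) i with hχdef
  have hχval : ∀ k i, i < nn k → χ i = g k i := by
    intro k i hi
    have hi' : i < nn (i + 1) := lt_of_lt_of_le (Nat.lt_succ_self i) (hge (i + 1))
    rcases le_total (i + 1) k with hle | hle
    · exact (hInv3' (i + 1) k hle i hi').symm
    · exact hInv3' k (i + 1) hle i hi
  have hY : {i | χ i = true} ∈ F := by
    refine hF.1 X hXF _ fun i hi => ?_
    have : χX i = true := by simp [hχXdef, hi]
    exact hInv2 (i + 1) i this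
  have hχmem : χ ∈ cantorCoded F := hY
  obtain ⟨s, ⟨m, rfl⟩, hs⟩ := hScov hχmem
  have hχKm : χ ∈ K m := hfK m (subset_closure hs)
  obtain ⟨k, hk2m, hkE⟩ := hmiss m
  have hχnot : χ ∉ K k := by
    refine hψv k (nn k) (g k) χ fun i hi => ?_
    have hi' : i < nn (k + 1) := by rw [hnn]; exact hi
    rw [hχval (k + 1) i hi']
    exact hInv4 k hkE i hi'
  exact hχnot (hKmono m k (by omega) hχKm)
end

section
/- Let F be a non-principal filter on ℕ. If the set of enumeration functions of members of F is unbounded in (ℕ→ℕ, eventual domination), then F is non-meager in Cantor space. -/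
open Filter Set

lemma my_nwd_union {X : Type*} [TopologicalSpace X] {s t : Set X}
    (hs : IsNowhereDense s) (ht : IsNowhereDense t) : IsNowhereDense (s ∪ t) := by
  unfold IsNowhereDense at *
  rw [closure_union]
  have h1 : interior (closure s ∪ closure t) \ closure s ⊆ closure t := fun y hy =>
    (interior_subset hy.1).resolve_left hy.2
  have h2 : IsOpen (interior (closure s ∪ closure t) \ closure s) :=
    isOpen_interior.sdiff isClosed_closure
  have h3 : interior (closure s ∪ closure t) \ closure s ⊆ interior (closure t) :=
    interior_maximal h1 h2
  rw [ht, Set.subset_empty_iff, Set.diff_eq_empty] at h3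
  have h5 : interior (closure s ∪ closure t) ⊆ interior (closure s) :=
    interior_maximal h3 isOpen_interior
  rw [hs, Set.subset_empty_iff] at h5
  exact h5

lemma avoid_step (B : Set (ℕ → Bool)) (hB : IsNowhereDense B) (n : ℕ) (t : ℕ → Bool) :
    ∃ (χ : ℕ → Bool) (m : ℕ), (∀ i, i < n → χ i = t i) ∧
      ∀ χ' : ℕ → Bool, (∀ i, i < m → χ' i = χ i) → χ' ∉ B := by
  have hd : Dense (closure B)ᶜ := interior_eq_empty_iff_dense_compl.1 hB
  set C : Set (ℕ → Bool) := (↑(Finset.range n) : Set ℕ).pi (fun i => {t i}) with hC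
  have hCopen : IsOpen C := isOpen_set_pi (Finset.finite_toSet _) (fun i _ => isOpen_discrete _)
  have hCne : C.Nonempty := ⟨t, fun i _ => rfl⟩
  obtain ⟨χ, hχB, hχC⟩ := hd.exists_mem_open hCopen hCne
  obtain ⟨I, u, hu, hsub⟩ := isOpen_pi_iff.1 (isClosed_closure (s := B)).isOpen_compl χ hχB
  refine ⟨χ, (I.sup id) + 1, fun i hi => hχC i (by simpa using hi), fun χ' hχ' hmem => ?_⟩
  have : χ' ∈ (↑I : Set ℕ).pi u := by
    intro i hi
    have : χ' i = χ i := hχ' i (Nat.lt_succ_of_le (Finset.le_sup (f := id) hi))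
    rw [this]
    exact (hu i hi).2
  exact hsub this (subset_closure hmem)

lemma avoid_uniform (B : Set (ℕ → Bool)) (hB : IsNowhereDense B) (n : ℕ) :
    ∃ m, n < m ∧ ∃ w : (ℕ → Bool) → (ℕ → Bool),
      ∀ s : ℕ → Bool, (∀ i, i < n → w s i = s i) ∧
        ∀ χ : ℕ → Bool, (∀ i, i < m → χ i = w s i) → χ ∉ B := by
  have H := fun t : Fin n → Bool =>
    avoid_step B hB n (fun i => if h : i < n then t ⟨i, h⟩ else false)
  choose χ m h1 h2 using H
  refine ⟨max (n + 1) (Finset.univ.sup m), lt_of_lt_of_le (Nat.lt_succ_self n) (le_max_left _ _),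
    fun s => χ (fun i => s i), fun s => ⟨?_, ?_⟩⟩
  · intro i hi
    have := h1 (fun i : Fin n => s i) i hi
    simpa [hi] using this
  · intro ψ hψ
    refine h2 (fun i : Fin n => s i) ψ (fun i hi => hψ i ?_)
    exact lt_of_lt_of_le hi (le_trans (Finset.le_sup (Finset.mem_univ _)) (le_max_right _ _))

/-- If the enumeration functions of members of `F` are unbounded under eventual
domination, then `F` is non-meager. -/
theorem stmt12 (F : Set (Set ℕ)) (hF : IsNPFilter F)
    (h : ∀ g : ℕ → ℕ, ∃ X ∈ F, ¬ EvDom g (enum X)) :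
    ¬ IsMeagre (cantorCoded F) := by
  classical
  intro hMg
  obtain ⟨hup, hinter, hinf⟩ := hF
  obtain ⟨X0, hX0, -⟩ := h id
  have huniv : (Set.univ : Set ℕ) ∈ F := hup X0 hX0 _ (Set.subset_univ _)
  rw [isMeagre_iff_countable_union_isNowhereDense] at hMg
  obtain ⟨S, hSnwd, hScnt, hSsub⟩ := hMg
  have hSne : S.Nonempty := by
    by_contra hs
    rw [Set.not_nonempty_iff_eq_empty] at hs
    have h1 : (fun _ : ℕ => true) ∈ cantorCoded F := by
      simpa [cantorCoded] using huniv
    have := hSsub h1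
    simp [hs] at this
  obtain ⟨f, hf⟩ := hScnt.exists_eq_range hSne
  set N : ℕ → Set (ℕ → Bool) := fun k => ⋃ i ∈ Finset.range (k + 1), f i with hN
  have hfS : ∀ j, f j ∈ S := fun j => hf ▸ Set.mem_range_self j
  have hNnwd : ∀ k, IsNowhereDense (N k) := by
    intro k
    induction k with
    | zero => simpa [hN] using hSnwd (f 0) (hfS 0)
    | succ k ih =>
      have he : N (k + 1) = N k ∪ f (k + 1) := by
        simp only [hN, Finset.range_add_one, Finset.mem_insert]
        ext x
        simp only [Set.mem_iUnion, Set.mem_union]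
        constructor
        · rintro ⟨i, hi | hi, hx⟩
          · exact Or.inr (hi ▸ hx)
          · exact Or.inl ⟨i, hi, hx⟩
        · rintro (⟨i, hi, hx⟩ | hx)
          · exact ⟨i, Or.inr hi, hx⟩
          · exact ⟨k + 1, Or.inl rfl, hx⟩
      rw [he]
      exact my_nwd_union ih (hSnwd _ (hfS (k + 1)))
  have hNmono : ∀ j k, j ≤ k → N j ⊆ N k := by
    intro j k hjk x hx
    simp only [hN, Set.mem_iUnion] at hx ⊢
    obtain ⟨i, hi, hx⟩ := hx
    exact ⟨i, Finset.mem_range.2 (lt_of_lt_of_le (Finset.mem_range.1 hi) (by omega)), hx⟩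
  have hfN : ∀ j, f j ⊆ N j := by
    intro j x hx
    simp only [hN, Set.mem_iUnion]
    exact ⟨j, Finset.self_mem_range_succ j, hx⟩
  -- choose intervals
  have key := fun (k n : ℕ) => avoid_uniform (N k) (hNnwd k) n
  choose M hM1 W hW using key
  set e : ℕ → ℕ := fun k => Nat.rec 0 (fun k ih => M k ih) k with he
  have hes : ∀ k, e (k + 1) = M k (e k) := fun k => rfl
  have hemono : StrictMono e := strictMono_nat_of_lt_succ (fun k => hM1 k (e k))
  have hele : ∀ k, k ≤ e k := fun k => hemono.le_apply
  set w : ℕ → (ℕ → Bool) → (ℕ → Bool) := fun k => W k (e k) with hwdef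
  have hw1 : ∀ k s i, i < e k → w k s i = s i := fun k s i hi => (hW k (e k) s).1 i hi
  have hw2 : ∀ k s χ, (∀ i, i < e (k + 1) → χ i = w k s i) → χ ∉ N k :=
    fun k s χ hχ => (hW k (e k) s).2 χ hχ
  -- interval decomposition
  have hcover : ∀ i : ℕ, ∃ k, e k ≤ i ∧ i < e (k + 1) := by
    intro i
    have hex : ∃ k, i < e (k + 1) := ⟨i, lt_of_lt_of_le (Nat.lt_succ_self i) (hele (i + 1))⟩
    refine ⟨Nat.find hex, ?_, Nat.find_spec hex⟩
    cases hfind : Nat.find hex with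
    | zero =>
      rw [show e 0 = 0 from rfl]
      exact Nat.zero_le i
    | succ k' =>
      exact not_lt.1 (Nat.find_min hex (show k' < Nat.find hex by omega))
  set g : ℕ → ℕ := fun j => e (2 * j + 2) with hg
  obtain ⟨X, hXF, hXnd⟩ := h g
  by_cases hfin : ∃ K, ∀ k, K ≤ k → (X ∩ Set.Ico (e k) (e (k + 1))).Nonempty
  · obtain ⟨K, hK⟩ := hfin
    apply hXnd
    rw [EvDom, Filter.eventually_atTop]
    refine ⟨K + 1, fun j hj => ?_⟩
    have hsel : ∀ i : ℕ, ∃ y, y ∈ X ∧ e (K + i) ≤ y ∧ y < e (K + i + 1) := by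
      intro i
      obtain ⟨y, hy1, hy2⟩ := hK (K + i) (Nat.le_add_right K i)
      exact ⟨y, hy1, hy2.1, hy2.2⟩
    choose x hx1 hx2 hx3 using hsel
    have hxlt : ∀ a b : ℕ, a < b → x a < x b := by
      intro a b hab
      calc x a < e (K + a + 1) := hx3 a
        _ ≤ e (K + b) := hemono.monotone (show K + a + 1 ≤ K + b by omega)
        _ ≤ x b := hx2 b
    -- count bound
    have hcount : j < Nat.count (· ∈ X) (e (K + j + 1)) := by
      rw [Nat.count_eq_card_filter_range]
      have hmap : ∀ i ∈ Finset.range (j + 1),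
          x i ∈ (Finset.range (e (K + j + 1))).filter (· ∈ X) := by
        intro i hi
        rw [Finset.mem_filter, Finset.mem_range]
        have hi' := Finset.mem_range.1 hi
        exact ⟨lt_of_lt_of_le (hx3 i) (hemono.monotone (show K + i + 1 ≤ K + j + 1 by omega)),
          hx1 i⟩
      have hinj : Set.InjOn x (Finset.range (j + 1)) := by
        intro a _ b _ hab
        by_contra hne
        rcases lt_or_gt_of_ne hne with hlt | hlt
        · exact absurd hab (hxlt a b hlt).ne
        · exact absurd hab.symm (hxlt b a hlt).ne
      have := Finset.card_le_card_of_injOn x hmap hinj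
      simpa using this
    have hlt := Nat.nth_lt_of_lt_count hcount
    show enum X j < e (2 * j + 2)
    calc enum X j < e (K + j + 1) := hlt
      _ ≤ e (2 * j + 2) := hemono.monotone (show K + j + 1 ≤ 2 * j + 2 by omega)
  · push_neg at hfin
    set missed : ℕ → Prop := fun k => X ∩ Set.Ico (e k) (e (k + 1)) = ∅ with hmissed
    set c : ℕ → (ℕ → Bool) := fun k =>
      Nat.rec (fun _ => false)
        (fun k ck => fun i =>
          if i < e k then ck i else if missed k then w k ck i else decide (i ∈ X)) k with hc
    have hcs : ∀ k i, c (k + 1) i =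
        if i < e k then c k i else if missed k then w k (c k) i else decide (i ∈ X) :=
      fun k i => rfl
    have hcoh : ∀ k k', k ≤ k' → ∀ i, i < e k → c k' i = c k i := by
      intro k k' hkk'
      induction k', hkk' using Nat.le_induction with
      | base => intro i _; rfl
      | succ k'' hk'' ih =>
        intro i hi
        rw [hcs, if_pos (lt_of_lt_of_le hi (hemono.monotone hk''))]
        exact ih i hi
    set χ : ℕ → Bool := fun i => c (i + 1) i with hχ
    have hχc : ∀ k i, i < e k → χ i = c k i := by
      intro k i hi
      have h1 : i < e (i + 1) := lt_of_lt_of_le (Nat.lt_succ_self i) (hele (i + 1))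
      rcases le_total k (i + 1) with hk | hk
      · exact hcoh k (i + 1) hk i hi
      · exact (hcoh (i + 1) k hk i h1).symm
    have hXsub : X ⊆ {n | χ n = true} := by
      intro i hi
      obtain ⟨k, hk1, hk2⟩ := hcover i
      have hnm : ¬ missed k := by
        intro hm
        have : i ∈ X ∩ Set.Ico (e k) (e (k + 1)) := ⟨hi, hk1, hk2⟩
        rw [show missed k = (X ∩ Set.Ico (e k) (e (k + 1)) = ∅) from rfl] at hm
        rw [hm] at this
        exact this
      have hik : i < e (k + 1) := hk2
      have : χ i = c (k + 1) i := hχc (k + 1) i hik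
      rw [Set.mem_setOf_eq, this, hcs, if_neg (not_lt.2 hk1), if_neg hnm]
      simpa using hi
    have hχF : χ ∈ cantorCoded F := hup X hXF _ hXsub
    obtain ⟨s, hsS, hχs⟩ := hSsub hχF
    obtain ⟨j, rfl⟩ : ∃ j, f j = s := by rw [hf] at hsS; exact hsS
    obtain ⟨k, hkj, hkm⟩ := hfin j
    have hχN : χ ∉ N k := by
      apply hw2 k (c k)
      intro i hik1
      by_cases hik : i < e k
      · rw [hχc k i hik, hw1 k (c k) i hik]
      · have h2 : χ i = c (k + 1) i := hχc (k + 1) i hik1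
        rw [h2, hcs, if_neg hik, if_pos (show missed k from hkm)]
    exact hχN (hNmono j k hkj (hfN j hχs))
end

section
/- Let F be a non-principal filter on ℕ and suppose the set of enumeration functions of members of F is unbounded with respect to eventual domination. Then for every partition of ℕ into disjoint finite sets there is a member of F disjoint from infinitely many blocks of the partition. -/
open Filter Set

open Function
open scoped Finset

/- Choose `g k` so that the blocks `I 0, …, I (2k)` all lie below `g k`. Whenever
`g k ≤ enum X k`, the set `X` has at most `k` elements below `g k`; since the blocks are
disjoint, at most `k` of these `2k + 1` blocks meet `X`, so at least `k + 1` of them miss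
it. This happens for arbitrarily large `k`, so `X` misses infinitely many blocks. -/

theorem Finset.card_le_card_of_forall_inter_nonempty {ι α : Type*} {I : ι → Set α}
    (hI : Pairwise (Disjoint on I)) {s : Finset ι} {t : Finset α}
    (h : ∀ i ∈ s, ((t : Set α) ∩ I i).Nonempty) : #s ≤ #t := by
  refine Finset.card_le_card_of_forall_subsingleton (fun i x => x ∈ I i)
    (fun i hi => (h i hi).imp fun _ hx => hx) fun x _ i hi j hj => ?_
  by_contra hne
  exact (hI hne).ne_of_mem hi.2 hj.2 rfl

theorem exists_forall_subset_Iio_of_finite {ι : Type*} {I : ι → Set ℕ} {s : Set ι}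
    (hs : s.Finite) (hI : ∀ i ∈ s, (I i).Finite) : ∃ B, ∀ i ∈ s, I i ⊆ Iio B := by
  obtain ⟨B, hB⟩ := (hs.biUnion hI).bddAbove
  exact ⟨B + 1, fun i hi x hx => Nat.lt_succ_of_le (hB (mem_biUnion hi hx))⟩

theorem card_le_count_of_forall_inter_nonempty {X : Set ℕ} [DecidablePred (· ∈ X)]
    {I : ℕ → Set ℕ} (hI : Pairwise (Disjoint on I)) {s : Finset ℕ} {B : ℕ}
    (hB : ∀ n ∈ s, I n ⊆ Iio B) (hs : ∀ n ∈ s, (X ∩ I n).Nonempty) :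
    #s ≤ Nat.count (· ∈ X) B := by
  rw [Nat.count_eq_card_filter_range]
  refine Finset.card_le_card_of_forall_inter_nonempty hI fun n hn => ?_
  obtain ⟨x, hxX, hxI⟩ := hs n hn
  exact ⟨x, by simpa using ⟨hB n hn hxI, hxX⟩, hxI⟩

theorem Set.infinite_of_forall_exists_lt_card_filter_range {S : Set ℕ}
    [DecidablePred (· ∈ S)] (h : ∀ N, ∃ m, N < #{n ∈ Finset.range m | n ∈ S}) : S.Infinite := by
  intro hS
  obtain ⟨m, hm⟩ := h hS.toFinset.card
  refine hm.not_ge (Finset.card_le_card fun n hn => ?_)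
  simpa using (Finset.mem_filter.1 hn).2

open Finset in
theorem stmt14_general (F : Set (Set ℕ))
    (h : ∀ g : ℕ → ℕ, ∃ X ∈ F, ¬ EvDom g (enum X)) :
    ∀ I : ℕ → Set ℕ, (∀ n, (I n).Finite) → (∀ n, (I n).Nonempty) →
      (Pairwise fun i j => Disjoint (I i) (I j)) → (⋃ n, I n) = Set.univ →
      ∃ X ∈ F, {n : ℕ | X ∩ I n = ∅}.Infinite := by
  classical
  intro I hfin _ hdisj _
  choose g hg using fun k =>
    exists_forall_subset_Iio_of_finite (finite_Iic (2 * k)) fun n _ => hfin n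
  obtain ⟨X, hXF, hX⟩ := h g
  refine ⟨X, hXF, infinite_of_forall_exists_lt_card_filter_range fun N => ?_⟩
  obtain ⟨k, hNk, hk⟩ := frequently_atTop.1 (not_eventually.1 hX) N
  have hmeet : #{n ∈ range (2 * k + 1) | ¬ X ∩ I n = ∅} ≤ k := by
    refine (card_le_count_of_forall_inter_nonempty hdisj (B := g k) (fun n hn => ?_)
      fun n hn => ?_).trans (Nat.le_nth_of_count_le (not_lt.1 hk))
    · exact hg k n (by simpa [Nat.lt_succ_iff] using (mem_filter.1 hn).1)
    · exact nonempty_iff_ne_empty.2 (mem_filter.1 hn).2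
  have hsplit := card_filter_add_card_filter_not (s := range (2 * k + 1))
    (p := fun n => X ∩ I n = ∅)
  refine ⟨2 * k + 1, ?_⟩
  simp only [card_range, mem_ofPred_eq] at hsplit ⊢
  omega

/-- If the enumeration functions of members of `F` are unbounded under eventual
domination, then every partition of `ℕ` into disjoint finite sets has a member of `F`
disjoint from infinitely many blocks. -/
theorem stmt14 (F : Set (Set ℕ)) (hF : IsNPFilter F)
    (h : ∀ g : ℕ → ℕ, ∃ X ∈ F, ¬ EvDom g (enum X)) :
    ∀ I : ℕ → Set ℕ, (∀ n, (I n).Finite) → (∀ n, (I n).Nonempty) →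
      (Pairwise fun i j => Disjoint (I i) (I j)) → (⋃ n, I n) = Set.univ →
      ∃ X ∈ F, {n : ℕ | X ∩ I n = ∅}.Infinite :=
  stmt14_general F h
end

section
/- If every subset of Cantor space 2^ℕ has the property of Baire, then there are no rare non-principal filters on ℕ, and hence for every non-principal filter F on ℕ the game G2(F) is determined (ONE has a winning strategy). -/
open Filter Set

namespace Stmt15Aux
open Topology

def cylSet (ψ : ℕ → Bool) (b : ℕ) : Set (ℕ → Bool) := {χ | ∀ i < b, χ i = ψ i}

lemma isOpen_cylSet (ψ : ℕ → Bool) (b : ℕ) : IsOpen (cylSet ψ b) := by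
  have : cylSet ψ b = ⋂ i ∈ Finset.range b, (fun χ : ℕ → Bool => χ i) ⁻¹' {ψ i} := by
    ext χ; simp [cylSet]
  rw [this]
  exact isOpen_biInter_finset fun i _ => (isOpen_discrete _).preimage (continuous_apply i)

lemma self_mem_cylSet (ψ : ℕ → Bool) (b : ℕ) : ψ ∈ cylSet ψ b := fun _ _ => rfl

lemma exists_cyl_subset {u : Set (ℕ → Bool)} (hu : IsOpen u) {χ : ℕ → Bool} (hχ : χ ∈ u) :
    ∃ b, cylSet χ b ⊆ u := by
  rcases isOpen_pi_iff.mp hu χ hχ with ⟨I, v, h1, h2⟩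
  refine ⟨(I.sup id) + 1, fun χ' hχ' => h2 ?_⟩
  intro i hi
  have hlt : i < I.sup id + 1 := Nat.lt_succ_of_le (Finset.le_sup (f := id) hi)
  have : χ' i = χ i := hχ' i hlt
  rw [this]
  exact (h1 i hi).2

lemma extend_avoid {C : Set (ℕ → Bool)} (hC : IsClosed C) (hCi : interior C = ∅)
    (ψ : ℕ → Bool) (a : ℕ) :
    ∃ (b : ℕ) (τ : ℕ → Bool), a ≤ b ∧ (∀ i < a, τ i = ψ i) ∧ ∀ χ, (∀ i < b, χ i = τ i) → χ ∉ C := by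
  have hd : Dense Cᶜ := interior_eq_empty_iff_dense_compl.mp hCi
  obtain ⟨χ₀, hcyl, hcc⟩ := hd.inter_open_nonempty _ (isOpen_cylSet ψ a) ⟨ψ, self_mem_cylSet ψ a⟩
  obtain ⟨b₀, hb₀⟩ := exists_cyl_subset hC.isOpen_compl hcc
  refine ⟨max a b₀, χ₀, le_max_left _ _, fun i hi => hcyl i hi, fun χ hχ => ?_⟩
  exact hb₀ (fun i hi => hχ i (lt_of_lt_of_le hi (le_max_right _ _)))

lemma list_avoid {C : Set (ℕ → Bool)} (hC : IsClosed C) (hCi : interior C = ∅) (a : ℕ)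
    (L : List (ℕ → Bool)) : ∃ (b : ℕ) (τ : ℕ → Bool), a ≤ b ∧
      ∀ s ∈ L, ∀ χ : ℕ → Bool, (∀ i < a, χ i = s i) →
        (∀ i, a ≤ i → i < b → χ i = τ i) → χ ∉ C := by
  induction L with
  | nil => exact ⟨a, fun _ => false, le_rfl, by simp⟩
  | cons s L ih =>
    obtain ⟨b, τ, hab, hL⟩ := ih
    obtain ⟨b', τ', hbb', hpre, havoid⟩ :=
      extend_avoid hC hCi (fun i => if i < a then s i else τ i) b
    refine ⟨b', τ', hab.trans hbb', ?_⟩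
    rintro s' hs' χ hpref hblock
    rcases List.mem_cons.mp hs' with rfl | hs'
    · refine havoid χ (fun i hib' => ?_)
      by_cases hia : i < a
      · rw [hpref i hia, hpre i (lt_of_lt_of_le hia hab), if_pos hia]
      · exact hblock i (le_of_not_gt hia) hib'
    · refine hL s' hs' χ hpref (fun i hai hib => ?_)
      rw [hblock i hai (lt_of_lt_of_le hib hbb'), hpre i hib, if_neg (not_lt.mpr hai)]

lemma block_avoid {C : Set (ℕ → Bool)} (hC : IsClosed C) (hCi : interior C = ∅) (a : ℕ) :
    ∃ (b : ℕ) (τ : ℕ → Bool), a < b ∧ ∀ χ : ℕ → Bool, (∀ i, a ≤ i → i < b → χ i = τ i) → χ ∉ C := by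
  obtain ⟨b, τ, hab, h⟩ := list_avoid hC hCi a
    (((Finset.univ : Finset (Fin a → Bool)).toList).map
      (fun f i => if h : i < a then f ⟨i, h⟩ else false))
  refine ⟨max b (a+1), τ, lt_of_lt_of_le (Nat.lt_succ_self a) (le_max_right _ _), fun χ hχ => ?_⟩
  refine h (fun i => if h : i < a then χ i else false) ?_ χ ?_ ?_
  · apply List.mem_map.mpr
    refine ⟨fun j : Fin a => χ j, Finset.mem_toList.mpr (Finset.mem_univ _), ?_⟩
    funext i; by_cases h : i < a <;> simp [h]
  · intro i hia; simp [hia]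
  · intro i hai hib; exact hχ i hai (lt_of_lt_of_le hib (le_max_left _ _))

lemma interior_union_closed {s t : Set (ℕ → Bool)} (hs : IsClosed s)
    (hsi : interior s = ∅) (hti : interior t = ∅) :
    interior (s ∪ t) = ∅ := by
  have h1 : interior (s ∪ t) \ s ⊆ interior t := by
    refine interior_maximal ?_ (isOpen_interior.sdiff hs)
    intro x hx
    exact (interior_subset hx.1).resolve_left hx.2
  have h2 : interior (s ∪ t) ⊆ s := by
    intro x hx
    by_contra hxs
    have := h1 ⟨hx, hxs⟩
    rw [hti] at this
    exact this
  have h3 := interior_maximal h2 isOpen_interior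
  rw [hsi] at h3
  exact eq_empty_of_subset_empty h3


lemma meager_coded {F : Set (Set ℕ)} (hF : IsNPFilter F)
    (hBM : BaireMeasurableSet (cantorCoded F)) : IsMeagre (cantorCoded F) := by
  obtain ⟨u, hu, heq⟩ := hBM.residualEq_isOpen
  have hR : {χ : ℕ → Bool | χ ∈ cantorCoded F ↔ χ ∈ u} ∈ residual _ :=
    Filter.eventuallyEq_set.mp heq
  have hue : u = ∅ := by
    by_contra hne
    obtain ⟨χ₀, hχ₀⟩ := Set.nonempty_iff_ne_empty.mpr hne
    obtain ⟨b, hb⟩ := exists_cyl_subset hu hχ₀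
    set g : (ℕ → Bool) → (ℕ → Bool) := fun χ i => if i < b then χ i else !(χ i) with hg
    have hginv : ∀ χ, g (g χ) = χ := by
      intro χ; funext i; by_cases h : i < b <;> simp [hg, h]
    have hgc : Continuous g := by
      refine continuous_pi fun i => ?_
      by_cases h : i < b
      · simpa [hg, h] using continuous_apply i
      · simp only [hg, h, if_false]
        exact Continuous.comp (continuous_of_discreteTopology (f := Bool.not)) (continuous_apply i)
    have hgsurj : Function.Surjective g := fun χ => ⟨g χ, hginv χ⟩
    have hgR : g ⁻¹' {χ : ℕ → Bool | χ ∈ cantorCoded F ↔ χ ∈ u} ∈ residual _ := by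
      rcases mem_residual.mp hR with ⟨t, hts, htg, htd⟩
      refine mem_residual.mpr ⟨g ⁻¹' t, Set.preimage_mono hts, ?_, ?_⟩
      · rcases htg with ⟨T, hT, hTc, rfl⟩
        rw [Set.preimage_sInter]
        exact IsGδ.biInter hTc fun s hs => ((hT s hs).preimage hgc).isGδ
      · have himg : g ⁻¹' t = g '' t := by
          ext x
          constructor
          · intro h; exact ⟨g x, h, hginv x⟩
          · rintro ⟨y, hy, rfl⟩; rw [Set.mem_preimage, hginv]; exact hy
        rw [himg]
        exact hgsurj.denseRange.dense_image hgc htd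
    have hden := dense_of_mem_residual (Filter.inter_mem hR hgR)
    obtain ⟨χ, hχcyl, hχR, hχgR⟩ :=
      hden.inter_open_nonempty _ (isOpen_cylSet χ₀ b) ⟨χ₀, self_mem_cylSet χ₀ b⟩
    have hχu : χ ∈ u := hb hχcyl
    have hgχu : g χ ∈ u := by
      refine hb (fun i hi => ?_)
      simp only [hg, if_pos hi]
      exact hχcyl i hi
    have hXF : {n | χ n = true} ∈ F := hχR.mpr hχu
    have hYF : {n | g χ n = true} ∈ F := hχgR.mpr hgχu
    have hXY := hF.2.1 _ hXF _ hYF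
    have hsub : {n | χ n = true} ∩ {n | g χ n = true} ⊆ Set.Iio b := by
      rintro n ⟨h1, h2⟩
      by_contra h
      simp only [Set.mem_Iio, not_lt] at h
      simp only [hg, Set.mem_setOf_eq, if_neg (not_lt.mpr h)] at h2
      rw [Set.mem_setOf_eq] at h1
      rw [h1] at h2
      exact absurd h2 (by simp)
    exact absurd (hF.2.2 _ hXY) ((Set.finite_Iio b).subset hsub).not_infinite
  rw [IsMeagre]
  refine Filter.mem_of_superset hR ?_
  intro χ h hS
  rw [hue] at h
  exact h.mp hS


def seqC (f : ℕ → Set (ℕ → Bool)) : ℕ → Set (ℕ → Bool)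
  | 0 => closure (f 0)
  | k+1 => seqC f k ∪ closure (f (k+1))

noncomputable def seqA (step : ℕ → ℕ → ℕ × (ℕ → Bool)) : ℕ → ℕ × (ℕ → Bool)
  | 0 => (0, fun _ => false)
  | k+1 => step k (seqA step k).1


end Stmt15Aux

open Stmt15Aux in
/-- If every subset of Cantor space has the property of Baire, then there are no rare
non-principal filters, and for every non-principal filter `F` the game `G2(F)` is
determined: ONE has a winning strategy. -/
theorem stmt15 (hBP : ∀ S : Set (ℕ → Bool), BaireMeasurableSet S) :
    ∀ F : Set (Set ℕ), IsNPFilter F → ¬ IsRare F ∧ ∃ σ : Strat, OneWinning2 F σ := by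
  intro F hF
  classical
  have hme : IsMeagre (cantorCoded F) := meager_coded hF (hBP _)
  obtain ⟨S, hSnwd, hSc, hSsub⟩ := isMeagre_iff_countable_union_isNowhereDense.mp hme
  obtain ⟨f, hfr⟩ := (hSc.insert ∅).exists_eq_range (Set.insert_nonempty _ _)
  have hfnwd : ∀ j, IsNowhereDense (f j) := by
    intro j
    have hj : f j ∈ insert ∅ S := hfr ▸ Set.mem_range_self j
    rcases Set.mem_insert_iff.mp hj with h | h
    · rw [h]; exact isNowhereDense_empty
    · exact hSnwd _ h
  have hCcl : ∀ k, IsClosed (seqC f k) ∧ interior (seqC f k) = ∅ := by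
    intro k
    induction k with
    | zero => exact ⟨isClosed_closure, hfnwd 0⟩
    | succ k ih =>
      exact ⟨ih.1.union isClosed_closure,
        interior_union_closed ih.1 ih.2 (hfnwd (k+1))⟩
  have hCmono : Monotone (seqC f) := monotone_nat_of_le_succ fun k => by
    rw [show seqC f (k+1) = seqC f k ∪ closure (f (k+1)) from rfl]
    exact Set.subset_union_left
  have hfC : ∀ j, f j ⊆ seqC f j := by
    intro j
    cases j with
    | zero => exact subset_closure
    | succ j =>
      rw [show seqC f (j+1) = seqC f j ∪ closure (f (j+1)) from rfl]
      exact subset_closure.trans Set.subset_union_right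
  -- choose the interval/pattern step function
  have hstep : ∀ (k a : ℕ), ∃ p : ℕ × (ℕ → Bool), a < p.1 ∧
      ∀ χ : ℕ → Bool, (∀ i, a ≤ i → i < p.1 → χ i = p.2 i) → χ ∉ seqC f k := by
    intro k a
    obtain ⟨b, τ, hab, h⟩ := block_avoid (hCcl k).1 (hCcl k).2 a
    exact ⟨(b, τ), hab, h⟩
  choose step hlt havoid using hstep
  set a : ℕ → ℕ := fun k => (seqA step k).1 with hadef
  set τ : ℕ → (ℕ → Bool) := fun k => (seqA step (k+1)).2 with hτdef
  have ha0 : a 0 = 0 := rfl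
  have hamono : StrictMono a := strictMono_nat_of_lt_succ fun k => hlt k (a k)
  have hblockavoid : ∀ k (χ : ℕ → Bool),
      (∀ i, a k ≤ i → i < a (k+1) → χ i = τ k i) → χ ∉ seqC f k :=
    fun k => havoid k (a k)
  -- block function
  have hblkex : ∀ i : ℕ, ∃ k, a k ≤ i ∧ i < a (k+1) := by
    intro i
    induction i with
    | zero =>
      refine ⟨0, le_of_eq ha0, ?_⟩
      rw [← ha0]; exact hamono (Nat.lt_succ_self 0)
    | succ i ih =>
      obtain ⟨k, h1, h2⟩ := ih
      by_cases h : i + 1 < a (k+1)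
      · exact ⟨k, h1.trans (Nat.le_succ i), h⟩
      · refine ⟨k+1, not_lt.mp h, ?_⟩
        have : i + 1 ≤ a (k+1) := h2
        exact lt_of_le_of_lt this (hamono (Nat.lt_succ_self (k+1)))
  choose blk hblk1 hblk2 using hblkex
  have hblk_unique : ∀ k i, a k ≤ i → i < a (k+1) → blk i = k := by
    intro k i h1 h2
    rcases lt_trichotomy (blk i) k with h | h | h
    · exact absurd (lt_of_lt_of_le (hblk2 i) (hamono.monotone (Nat.succ_le_of_lt h)))
        (not_lt.mpr h1)
    · exact h
    · exact absurd (lt_of_lt_of_le h2 (hamono.monotone (Nat.succ_le_of_lt h)))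
        (not_lt.mpr (hblk1 i))
  -- the key combinatorial property
  have hstar : ∀ X ∈ F, ∃ N, ∀ k, N ≤ k → ∃ i, i ∈ X ∧ a k ≤ i ∧ i < a (k+1) := by
    intro X hX
    by_contra hcon
    push_neg at hcon
    set Bad : Set ℕ := {k | ∀ i, i ∈ X → a k ≤ i → a (k+1) ≤ i} with hBadDef
    have hbadcof : ∀ N, ∃ k, N ≤ k ∧ k ∈ Bad := hcon
    set χ : ℕ → Bool :=
      fun i => if (i ∈ X ∨ (blk i ∈ Bad ∧ τ (blk i) i = true)) then true else false with hχdef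
    have hχval : ∀ i, χ i =
        if (i ∈ X ∨ (blk i ∈ Bad ∧ τ (blk i) i = true)) then true else false := fun _ => rfl
    have hXsub : X ⊆ {n | χ n = true} := by
      intro n hn
      simp only [Set.mem_setOf_eq, hχval, if_pos (Or.inl hn)]
    have hχF : χ ∈ cantorCoded F := hF.1 X hX _ hXsub
    obtain ⟨t, htS, hχt⟩ := hSsub hχF
    have ht : t ∈ Set.range f := hfr ▸ Set.mem_insert_of_mem _ htS
    obtain ⟨j, rfl⟩ := ht
    obtain ⟨k, hjk, hkbad⟩ := hbadcof j
    refine hblockavoid k χ ?_ (hCmono hjk (hfC j hχt))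
    intro i h1 h2
    have hbi : blk i = k := hblk_unique k i h1 h2
    have hiX : i ∉ X := fun hiX => absurd h2 (not_lt.mpr (hkbad i hiX h1))
    cases hb : τ k i with
    | true => rw [hχval i, hbi, if_pos (Or.inr ⟨hkbad, hb⟩)]
    | false =>
      rw [hχval i, hbi, if_neg]
      rintro (h | ⟨-, h⟩)
      · exact hiX h
      · rw [hb] at h; exact Bool.false_ne_true h
  -- part 1 : not rare
  have hnotrare : ¬ IsRare F := by
    intro hrare
    obtain ⟨X, hXF, hXsel⟩ := hrare (fun m => Set.Ico (a (2*m)) (a (2*m+2)))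
      (fun m => Set.finite_Ico _ _)
      (fun m => ⟨a (2*m), Set.mem_Ico.mpr ⟨le_rfl, hamono (by omega)⟩⟩)
      (by
        intro m m' hmm'
        rcases Nat.lt_or_ge m m' with h | h
        · refine Set.disjoint_left.mpr ?_
          rintro x ⟨-, hx2⟩ ⟨hx3, -⟩
          exact absurd (lt_of_lt_of_le hx2 (hamono.monotone (by omega))) (not_lt.mpr hx3)
        · have h' : m' < m := lt_of_le_of_ne h (Ne.symm hmm')
          refine Set.disjoint_left.mpr ?_
          rintro x ⟨hx1, -⟩ ⟨-, hx4⟩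
          exact absurd (lt_of_lt_of_le hx4 (hamono.monotone (by omega))) (not_lt.mpr hx1))
      (by
        ext x
        simp only [Set.mem_iUnion, Set.mem_univ, iff_true, Set.mem_Ico]
        refine ⟨blk x / 2, ?_, ?_⟩
        · exact le_trans (hamono.monotone (by omega)) (hblk1 x)
        · exact lt_of_lt_of_le (hblk2 x) (hamono.monotone (by omega)))
    obtain ⟨N, hN⟩ := hstar X hXF
    obtain ⟨i, hiX, hi1, hi2⟩ := hN (2*N) (by omega)
    obtain ⟨i', hi'X, hi'1, hi'2⟩ := hN (2*N+1) (by omega)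
    have heq : i = i' := by
      refine hXsel N ⟨hiX, Set.mem_Ico.mpr ⟨hi1, ?_⟩⟩ ⟨hi'X, Set.mem_Ico.mpr ⟨?_, hi'2⟩⟩
      · exact lt_of_lt_of_le hi2 (hamono.monotone (by omega))
      · exact le_trans (hamono.monotone (by omega)) hi'1
    have : i < i' := lt_of_lt_of_le hi2 hi'1
    omega
  refine ⟨hnotrare, ⟨fun l => a (2 * l.length + 2), ?_⟩⟩
  rintro n ⟨hdom, hmem⟩
  have hone : ∀ k, oneFollow (fun l => a (2 * l.length + 2)) n k = a (2*k+2) := by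
    intro k
    simp [oneFollow]
  obtain ⟨K, hK⟩ := Filter.eventually_atTop.mp hdom
  obtain ⟨N, hN⟩ := hstar (Set.range n) hmem
  have hqex : ∀ k, ∃ p, N ≤ k → (a k ≤ n p ∧ n p < a (k+1)) := by
    intro k
    by_cases h : N ≤ k
    · obtain ⟨i, hi, h1, h2⟩ := hN k h
      obtain ⟨p, hp⟩ := hi
      exact ⟨p, fun _ => by rw [hp]; exact ⟨h1, h2⟩⟩
    · exact ⟨0, fun h' => absurd h' h⟩
  choose q hq using hqex
  set M := 2*(K + N + 1) with hM
  have hinj : Set.InjOn q (Finset.Icc N M) := by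
    intro k hk k' hk' hqq
    have hNk : N ≤ k := (Finset.mem_Icc.mp (Finset.mem_coe.mp hk)).1
    have hNk' : N ≤ k' := (Finset.mem_Icc.mp (Finset.mem_coe.mp hk')).1
    have h1 := hq k hNk
    have h2 := hq k' hNk'
    rw [hqq] at h1
    have e1 := hblk_unique k (n (q k')) h1.1 h1.2
    have e2 := hblk_unique k' (n (q k')) h2.1 h2.2
    exact e1.symm.trans e2
  have hbound : ∀ k ∈ Finset.Icc N M, q k ∈ Finset.range (K + M/2 + 1) := by
    intro k hk
    obtain ⟨hNk, hkM⟩ := Finset.mem_Icc.mp hk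
    by_cases h : q k < K
    · exact Finset.mem_range.mpr (by omega)
    · have hd := hK (q k) (not_lt.mp h)
      rw [hone] at hd
      have h2 := (hq k hNk).2
      have h3 := hamono.lt_iff_lt.mp (lt_trans hd h2)
      exact Finset.mem_range.mpr (by omega)
  have hcard := Finset.card_le_card_of_injOn q hbound hinj
  rw [Nat.card_Icc, Finset.card_range] at hcard
  omega
end
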